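/- arXiv:1602.00845 — 11 statements merged into one kernel-verified Lean document; each statement's English description precedes it below -/
import Mathlib

section
/- Let X be a topological space, Z a Hausdorff topological space, Z₁ ⊆ Z a subset equiconnected in Z witnessed by λ : Z × Z × [0,1] → Z, and g : X → Z. Let (Gₙ)ₙ₌₀^∞ be a sequence of functionally open subsets of X × X, (Fₙ)ₙ₌₀^∞ a sequence of functionally closed subsets of X × X, (φₙ)ₙ₌₁^∞ a sequence of separately continuous functions φₙ : X × X → [0,1], and (gₙ)ₙ₌₁^∞ a sequence of continuous mappings gₙ : X → Z₁, satisfying: (1) G₀ = F₀ = X × X and Δ_X = {(x,x) : x ∈ X} ⊆ G_{n+1} ⊆ Fₙ ⊆ Gₙ for every n ≥ 0; (2) (X × X) \ Gₙ ⊆ φₙ⁻¹({0}) and Fₙ ⊆ φₙ⁻¹({1}) for every n ≥ 1; (3) for every x ∈ X, every sequence (tₙ)ₙ₌₁^∞ of points tₙ ∈ [0,1], and every sequence (xₙ)ₙ₌₁^∞ of points xₙ ∈ X such that (xₙ, x) ∈ F_{n−1} for all n ≥ 1, one has λ(gₙ(xₙ), g_{n+1}(xₙ), tₙ) → g(x)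 as n → ∞. Then the mapping f : X × X → Z defined by f(x,y) = λ(gₙ(x), g_{n+1}(x), φₙ(x,y)) whenever (x,y) ∈ F_{n−1} \ Fₙ (n ≥ 1) and f(x,y) = g(x) whenever (x,y) ∈ ⋂ₙ₌₁^∞ Gₙ, is well-defined on all of X × X and separately continuous. -/
open Set Filter Topology

/-- A mapping `f : X × X → Z` is separately continuous if all its sections are continuous. -/
def SepCont {X Z : Type*} [TopologicalSpace X] [TopologicalSpace Z]
    (f : X × X → Z) : Prop :=
  (∀ x₀ : X, Continuous fun y => f (x₀, y)) ∧ (∀ y₀ : X, Continuous fun x => f (x, y₀))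

/-- A subset of a topological space is functionally open (a cozero set) if it is the preimage
of an open subset of `ℝ` under a continuous real-valued function. -/
def FunctionallyOpen {T : Type*} [TopologicalSpace T] (s : Set T) : Prop :=
  ∃ h : T → ℝ, Continuous h ∧ ∃ U : Set ℝ, IsOpen U ∧ s = h ⁻¹' U

/-- A subset is functionally closed (a zero set) if its complement is functionally open. -/
def FunctionallyClosed {T : Type*} [TopologicalSpace T] (s : Set T) : Prop :=
  FunctionallyOpen sᶜ

/-- `A` is equiconnected in `Z`, witnessed by `L : Z → Z → [0,1] → Z`. -/
def EquiconnectedIn {Z : Type*} [TopologicalSpace Z] (A : Set Z)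
    (L : Z → Z → unitInterval → Z) : Prop :=
  ContinuousOn (fun q : (Z × Z) × unitInterval => L q.1.1 q.1.2 q.2)
      (((A ×ˢ A) ∪ Set.diagonal Z) ×ˢ (Set.univ : Set unitInterval)) ∧
    (∀ a ∈ A, ∀ b ∈ A, ∀ t : unitInterval, L a b t ∈ A) ∧
    (∀ a ∈ A, ∀ b ∈ A, L a b 0 = a) ∧
    (∀ a ∈ A, ∀ b ∈ A, L a b 1 = b) ∧
    (∀ z : Z, ∀ t : unitInterval, L z z t = z)

lemma two_branch {α Z : Type*} [TopologicalSpace Z] {l : Filter α} {f h₁ h₂ : α → Z} {c : Z}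
    (H1 : Tendsto h₁ l (𝓝 c)) (H2 : Tendsto h₂ l (𝓝 c))
    (H : ∀ᶠ a in l, f a = h₁ a ∨ f a = h₂ a) : Tendsto f l (𝓝 c) := by
  rw [tendsto_def]
  intro U hU
  filter_upwards [H1.eventually_mem hU, H2.eventually_mem hU, H] with a ha1 ha2 ha
  rcases ha with h | h
  · rw [mem_preimage, h]; exact ha1
  · rw [mem_preimage, h]; exact ha2

theorem stmt0 {X Z : Type*} [TopologicalSpace X] [TopologicalSpace Z] [T2Space Z]
    (Z₁ : Set Z) (L : Z → Z → unitInterval → Z) (hL : EquiconnectedIn Z₁ L)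
    (g : X → Z) (G F : ℕ → Set (X × X)) (φ : ℕ → X × X → unitInterval)
    (gseq : ℕ → X → Z)
    (hGopen : ∀ n : ℕ, FunctionallyOpen (G n))
    (hFclosed : ∀ n : ℕ, FunctionallyClosed (F n))
    (hφ : ∀ n : ℕ, 1 ≤ n → SepCont (φ n))
    (hgseq_cont : ∀ n : ℕ, 1 ≤ n → Continuous (gseq n))
    (hgseq_mem : ∀ n : ℕ, 1 ≤ n → ∀ x : X, gseq n x ∈ Z₁)
    -- (1)
    (hG0 : G 0 = Set.univ) (hF0 : F 0 = Set.univ)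
    (h1 : ∀ n : ℕ, Set.diagonal X ⊆ G (n + 1) ∧ G (n + 1) ⊆ F n ∧ F n ⊆ G n)
    -- (2)
    (h2 : ∀ n : ℕ, 1 ≤ n →
      (Set.univ : Set (X × X)) \ G n ⊆ (φ n) ⁻¹' {0} ∧ F n ⊆ (φ n) ⁻¹' {1})
    -- (3)
    (h3 : ∀ x : X, ∀ t : ℕ → unitInterval, ∀ xs : ℕ → X,
      (∀ n : ℕ, 1 ≤ n → (xs n, x) ∈ F (n - 1)) →
      Tendsto (fun n : ℕ => L (gseq n (xs n)) (gseq (n + 1) (xs n)) (t n)) atTop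
        (𝓝 (g x))) :
    ∃ f : X × X → Z,
      (∀ n : ℕ, 1 ≤ n → ∀ p : X × X, p ∈ F (n - 1) \ F n →
        f p = L (gseq n p.1) (gseq (n + 1) p.1) (φ n p)) ∧
      (∀ p : X × X, p ∈ ⋂ n : ℕ, G (n + 1) → f p = g p.1) ∧
      SepCont f := by
    classical
  obtain ⟨hLcont, hLmem, hL0, hL1, hLdiag⟩ := hL
  -- basic set facts
  have hGF : ∀ n, G (n + 1) ⊆ F n := fun n => (h1 n).2.1
  have hFG : ∀ n, F n ⊆ G n := fun n => (h1 n).2.2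
  have hdiagF : ∀ k (x : X), (x, x) ∈ F k := fun k x => hGF k ((h1 k).1 (mem_diagonal x))
  have hFanti : Antitone F := antitone_nat_of_succ_le fun n => (hFG (n + 1)).trans (hGF n)
  have hGanti : Antitone G := antitone_nat_of_succ_le fun n => (hGF n).trans (hFG n)
  have hGsubF : ∀ n, 1 ≤ n → G n ⊆ F (n - 1) := by
    intro n hn
    have := hGF (n - 1)
    rwa [show n - 1 + 1 = n by omega] at this
  have hFcl : ∀ n, IsClosed (F n) := by
    intro n
    obtain ⟨h, hc, U, hU, hs⟩ := hFclosed n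
    exact isOpen_compl_iff.mp (hs ▸ hU.preimage hc)
  have hGo : ∀ n, IsOpen (G n) := by
    intro n
    obtain ⟨h, hc, U, hU, hs⟩ := hGopen n
    exact hs ▸ hU.preimage hc
  have hφ0 : ∀ n, 1 ≤ n → ∀ p, p ∉ G n → φ n p = 0 := fun n hn p hp =>
    mem_singleton_iff.mp ((h2 n hn).1 ⟨mem_univ p, hp⟩)
  have hφ1 : ∀ n, 1 ≤ n → ∀ p, p ∈ F n → φ n p = 1 := fun n hn p hp =>
    mem_singleton_iff.mp ((h2 n hn).2 hp)
  have hL0' : ∀ n, 1 ≤ n → ∀ x, L (gseq n x) (gseq (n + 1) x) 0 = gseq n x := fun n hn x =>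
    hL0 _ (hgseq_mem n hn x) _ (hgseq_mem (n + 1) (by omega) x)
  have hL1' : ∀ n, 1 ≤ n → ∀ x, L (gseq n x) (gseq (n + 1) x) 1 = gseq (n + 1) x := fun n hn x =>
    hL1 _ (hgseq_mem n hn x) _ (hgseq_mem (n + 1) (by omega) x)
  have contL : ∀ (u v : X → Z) (t : X → unitInterval), Continuous u → Continuous v →
      Continuous t → (∀ w, u w ∈ Z₁) → (∀ w, v w ∈ Z₁) →
      Continuous fun w => L (u w) (v w) (t w) := by
    intro u v t hu hv ht hu1 hv1
    exact hLcont.comp_continuous ((hu.prodMk hv).prodMk ht)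
      fun w => mem_prod.mpr ⟨Or.inl ⟨hu1 w, hv1 w⟩, mem_univ _⟩
  -- the function
  set f : X × X → Z := fun p =>
    if h : ∃ k, p ∉ F k then L (gseq (Nat.find h) p.1) (gseq (Nat.find h + 1) p.1) (φ (Nat.find h) p)
    else g p.1 with hf
  have hfind : ∀ (p : X × X) (h : ∃ k, p ∉ F k),
      1 ≤ Nat.find h ∧ p ∈ F (Nat.find h - 1) ∧ p ∉ F (Nat.find h) := by
    intro p h
    have hpos : 0 < Nat.find h := by
      apply Nat.pos_of_ne_zero
      intro h0
      have := Nat.find_spec h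
      rw [h0, hF0] at this
      exact this (mem_univ p)
    refine ⟨hpos, ?_, Nat.find_spec h⟩
    exact not_not.mp (Nat.find_min h (show Nat.find h - 1 < Nat.find h by omega))
  have claim1 : ∀ n, 1 ≤ n → ∀ p : X × X, p ∈ F (n - 1) \ F n →
      f p = L (gseq n p.1) (gseq (n + 1) p.1) (φ n p) := by
    intro n hn p hp
    have hex : ∃ k, p ∉ F k := ⟨n, hp.2⟩
    have hfe : Nat.find hex = n := by
      refine le_antisymm (Nat.find_le hp.2) ?_
      by_contra hlt
      push_neg at hlt
      exact Nat.find_spec hex (hFanti (show Nat.find hex ≤ n - 1 by omega) hp.1)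
    simp only [hf]
    rw [dif_pos hex, hfe]
  have claim2 : ∀ p : X × X, p ∈ ⋂ n : ℕ, G (n + 1) → f p = g p.1 := by
    intro p hp
    have hall : ∀ k, p ∈ F k := fun k => hGF k (mem_iInter.mp hp k)
    simp only [hf]
    rw [dif_neg]
    push_neg
    exact hall
  have fval_int : ∀ p : X × X, (∀ k, p ∈ F k) → f p = g p.1 := by
    intro p hall
    simp only [hf]
    rw [dif_neg]
    push_neg
    exact hall
  -- the branching lemma
  have hbranch : ∀ n, 1 ≤ n → ∀ p : X × X, p ∈ G (n - 1) → p ∉ F n →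
      f p = L (gseq n p.1) (gseq (n + 1) p.1) (φ n p) ∨
      (2 ≤ n ∧ f p = L (gseq (n - 1) p.1) (gseq (n - 1 + 1) p.1) (φ (n - 1) p)) := by
    intro n hn p hp1 hp2
    have hexp : ∃ k, p ∉ F k := ⟨n, hp2⟩
    obtain ⟨hm1, hmF, hmnF⟩ := hfind p hexp
    have hmn : Nat.find hexp ≤ n := Nat.find_le hp2
    have hlow : n - 1 ≤ Nat.find hexp := by
      by_contra hc
      push_neg at hc
      exact hmnF (hGF _ (hGanti (show Nat.find hexp + 1 ≤ n - 1 by omega) hp1))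
    have hcases : Nat.find hexp = n ∨ (2 ≤ n ∧ Nat.find hexp = n - 1) := by omega
    rcases hcases with he | ⟨h2n, he⟩
    · left
      exact claim1 n hn p ⟨he ▸ hmF, he ▸ hmnF⟩
    · right
      refine ⟨h2n, claim1 (n - 1) (by omega) p ⟨?_, ?_⟩⟩
      · rw [show n - 1 - 1 = Nat.find hexp - 1 by omega]; exact hmF
      · rw [show n - 1 = Nat.find hexp by omega]; exact hmnF
  -- g-equality on the intersection
  have geq : ∀ x y : X, (∀ k, (x, y) ∈ F k) → g x = g y := by
    intro x y h
    have ha := h3 x (fun _ => 0) (fun _ => x) (fun n _ => hdiagF (n - 1) x)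
    have hb := h3 y (fun _ => 0) (fun _ => x) (fun n _ => h (n - 1))
    exact tendsto_nhds_unique ha hb
  -- the key uniform convergence lemma
  have key : ∀ x₀ y₀ : X, (∀ k, (x₀, y₀) ∈ F k) → ∀ U ∈ 𝓝 (g y₀), ∃ N : ℕ, ∀ n, N ≤ n →
      1 ≤ n → ∀ x : X, (x, y₀) ∈ F (n - 1) → ∀ s : unitInterval,
      L (gseq n x) (gseq (n + 1) x) s ∈ U := by
    intro x₀ y₀ hx₀ U hU
    by_contra hcon
    push_neg at hcon
    set P : ℕ → Prop := fun n => ∃ x, (x, y₀) ∈ F (n - 1) ∧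
      ∃ s, L (gseq n x) (gseq (n + 1) x) s ∉ U with hP
    set xs : ℕ → X := fun n => if h : P n then h.choose else x₀ with hxs
    set ts : ℕ → unitInterval := fun n => if h : P n then h.choose_spec.2.choose else 0 with hts
    have hmemF : ∀ n, 1 ≤ n → (xs n, y₀) ∈ F (n - 1) := by
      intro n hn
      by_cases h : P n
      · simp only [hxs, dif_pos h]; exact h.choose_spec.1
      · simp only [hxs, dif_neg h]; exact hx₀ (n - 1)
    have htend := h3 y₀ ts xs hmemF
    obtain ⟨N, hN⟩ := eventually_atTop.mp (htend.eventually_mem hU)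
    obtain ⟨n, hnN, hn1, x, hxF, s, hs⟩ := hcon N
    have hPn : P n := ⟨x, hxF, s, hs⟩
    have hnot : L (gseq n (xs n)) (gseq (n + 1) (xs n)) (ts n) ∉ U := by
      simp only [hxs, hts, dif_pos hPn]
      exact hPn.choose_spec.2.choose_spec
    exact hnot (hN n hnN)
  refine ⟨f, claim1, claim2, ?_, ?_⟩
  · -- y-sections
    intro x₀
    rw [continuous_iff_continuousAt]
    intro y₀
    show Tendsto (fun y => f (x₀, y)) (𝓝 y₀) (𝓝 (f (x₀, y₀)))
    by_cases hall : ∀ k, (x₀, y₀) ∈ F k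
    · -- intersection case
      rw [fval_int (x₀, y₀) hall]
      rw [tendsto_def]
      intro U hU
      obtain ⟨N, hN⟩ := key x₀ x₀ (fun k => hdiagF k x₀) U hU
      have hy₀V : y₀ ∈ (fun y => (x₀, y)) ⁻¹' G (N + 1) := hFG (N + 1) (hall (N + 1))
      have hVopen : IsOpen ((fun y => ((x₀ : X), y)) ⁻¹' G (N + 1)) :=
        (hGo (N + 1)).preimage (Continuous.prodMk_right x₀)
      filter_upwards [hVopen.mem_nhds hy₀V] with y hy
      by_cases hA : ∀ k, (x₀, y) ∈ F k
      · rw [mem_preimage, fval_int (x₀, y) hA]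
        exact mem_of_mem_nhds hU
      · push_neg at hA
        obtain ⟨hm1, hmF, hmnF⟩ := hfind (x₀, y) hA
        have hNm : N ≤ Nat.find hA := by
          by_contra hc
          push_neg at hc
          exact hmnF (hFanti hc.le (hGF N hy))
        rw [mem_preimage, claim1 (Nat.find hA) hm1 (x₀, y) ⟨hmF, hmnF⟩]
        exact hN (Nat.find hA) hNm hm1 x₀ (hdiagF _ x₀) _
    · -- boundary cases
      push_neg at hall
      obtain ⟨hn1, hnF, hnnF⟩ := hfind (x₀, y₀) hall
      set n := Nat.find hall with hndef
      have hveq : f (x₀, y₀) = L (gseq n x₀) (gseq (n + 1) x₀) (φ n (x₀, y₀)) :=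
        claim1 n hn1 (x₀, y₀) ⟨hnF, hnnF⟩
      by_cases hGn : (x₀, y₀) ∈ G n
      · -- interior of the strip
        have hVopen : IsOpen ((fun y => ((x₀ : X), y)) ⁻¹' (G n ∩ (F n)ᶜ)) :=
          ((hGo n).inter (hFcl n).isOpen_compl).preimage (Continuous.prodMk_right x₀)
        have hcont : Continuous fun y => L (gseq n x₀) (gseq (n + 1) x₀) (φ n (x₀, y)) :=
          contL _ _ _ continuous_const continuous_const ((hφ n hn1).1 x₀)
            (fun _ => hgseq_mem n hn1 x₀) fun _ => hgseq_mem (n + 1) (by omega) x₀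
        rw [hveq]
        refine Tendsto.congr' ?_ hcont.continuousAt
        filter_upwards [hVopen.mem_nhds ⟨hGn, hnnF⟩] with y hy
        exact (claim1 n hn1 (x₀, y) ⟨hGsubF n hn1 hy.1, hy.2⟩).symm
      · -- boundary of the strip
        have hφ0' : φ n (x₀, y₀) = 0 := hφ0 n hn1 _ hGn
        have hfv : f (x₀, y₀) = gseq n x₀ := by
          rw [hveq]
          show L (gseq n x₀) (gseq (n + 1) x₀) (φ n (x₀, y₀)) = gseq n x₀
          rw [hφ0', hL0' n hn1]
        have hy₀V : y₀ ∈ (fun y => ((x₀ : X), y)) ⁻¹' (G (n - 1) ∩ (F n)ᶜ) :=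
          ⟨hFG (n - 1) hnF, hnnF⟩
        have hVopen : IsOpen ((fun y => ((x₀ : X), y)) ⁻¹' (G (n - 1) ∩ (F n)ᶜ)) :=
          ((hGo (n - 1)).inter (hFcl n).isOpen_compl).preimage (Continuous.prodMk_right x₀)
        have hcont2 : Continuous fun y => L (gseq n x₀) (gseq (n + 1) x₀) (φ n (x₀, y)) :=
          contL _ _ _ continuous_const continuous_const ((hφ n hn1).1 x₀)
            (fun _ => hgseq_mem n hn1 x₀) fun _ => hgseq_mem (n + 1) (by omega) x₀
        have hT2 : Tendsto (fun y => L (gseq n x₀) (gseq (n + 1) x₀) (φ n (x₀, y))) (𝓝 y₀)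
            (𝓝 (f (x₀, y₀))) := by
          have h : Tendsto (fun y => L (gseq n x₀) (gseq (n + 1) x₀) (φ n (x₀, y))) (𝓝 y₀)
              (𝓝 (L (gseq n x₀) (gseq (n + 1) x₀) (φ n (x₀, y₀)))) := hcont2.continuousAt
          rwa [← hveq] at h
        by_cases h2n : 2 ≤ n
        · have hcont1 : Continuous fun y =>
              L (gseq (n - 1) x₀) (gseq (n - 1 + 1) x₀) (φ (n - 1) (x₀, y)) :=
            contL _ _ _ continuous_const continuous_const ((hφ (n - 1) (by omega)).1 x₀)
              (fun _ => hgseq_mem (n - 1) (by omega) x₀)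
              fun _ => hgseq_mem (n - 1 + 1) (by omega) x₀
          have hT1 : Tendsto (fun y =>
              L (gseq (n - 1) x₀) (gseq (n - 1 + 1) x₀) (φ (n - 1) (x₀, y))) (𝓝 y₀)
              (𝓝 (f (x₀, y₀))) := by
            have hv1 : L (gseq (n - 1) x₀) (gseq (n - 1 + 1) x₀) (φ (n - 1) (x₀, y₀))
                = f (x₀, y₀) := by
              rw [hφ1 (n - 1) (by omega) _ hnF, hL1' (n - 1) (by omega), hfv,
                show n - 1 + 1 = n by omega]
            have h : Tendsto (fun y => L (gseq (n - 1) x₀) (gseq (n - 1 + 1) x₀)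
                (φ (n - 1) (x₀, y))) (𝓝 y₀)
                (𝓝 (L (gseq (n - 1) x₀) (gseq (n - 1 + 1) x₀) (φ (n - 1) (x₀, y₀)))) :=
              hcont1.continuousAt
            rwa [hv1] at h
          refine two_branch hT1 hT2 ?_
          filter_upwards [hVopen.mem_nhds hy₀V] with y hy
          rcases hbranch n hn1 (x₀, y) hy.1 hy.2 with hd | ⟨_, hd⟩
          · exact Or.inr hd
          · exact Or.inl hd
        · refine two_branch hT2 hT2 ?_
          filter_upwards [hVopen.mem_nhds hy₀V] with y hy
          rcases hbranch n hn1 (x₀, y) hy.1 hy.2 with hd | ⟨hge, _⟩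
          · exact Or.inr hd
          · omega
  · -- x-sections
    intro y₀
    rw [continuous_iff_continuousAt]
    intro x₀
    show Tendsto (fun x => f (x, y₀)) (𝓝 x₀) (𝓝 (f (x₀, y₀)))
    by_cases hall : ∀ k, (x₀, y₀) ∈ F k
    · -- intersection case
      rw [fval_int (x₀, y₀) hall]
      show Tendsto (fun x => f (x, y₀)) (𝓝 x₀) (𝓝 (g x₀))
      rw [geq x₀ y₀ hall]
      rw [tendsto_def]
      intro U hU
      obtain ⟨N, hN⟩ := key x₀ y₀ hall U hU
      have hx₀V : x₀ ∈ (fun x => ((x : X), y₀)) ⁻¹' G (N + 1) := hFG (N + 1) (hall (N + 1))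
      have hVopen : IsOpen ((fun x => ((x : X), y₀)) ⁻¹' G (N + 1)) :=
        (hGo (N + 1)).preimage (continuous_id.prodMk continuous_const)
      filter_upwards [hVopen.mem_nhds hx₀V] with x hx
      by_cases hA : ∀ k, (x, y₀) ∈ F k
      · rw [mem_preimage, fval_int (x, y₀) hA]
        show g x ∈ U
        rw [geq x y₀ hA]
        exact mem_of_mem_nhds hU
      · push_neg at hA
        obtain ⟨hm1, hmF, hmnF⟩ := hfind (x, y₀) hA
        have hNm : N ≤ Nat.find hA := by
          by_contra hc
          push_neg at hc
          exact hmnF (hFanti hc.le (hGF N hx))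
        rw [mem_preimage, claim1 (Nat.find hA) hm1 (x, y₀) ⟨hmF, hmnF⟩]
        exact hN (Nat.find hA) hNm hm1 x hmF _
    · -- boundary cases
      push_neg at hall
      obtain ⟨hn1, hnF, hnnF⟩ := hfind (x₀, y₀) hall
      set n := Nat.find hall with hndef
      have hveq : f (x₀, y₀) = L (gseq n x₀) (gseq (n + 1) x₀) (φ n (x₀, y₀)) :=
        claim1 n hn1 (x₀, y₀) ⟨hnF, hnnF⟩
      by_cases hGn : (x₀, y₀) ∈ G n
      · -- interior of the strip
        have hVopen : IsOpen ((fun x => ((x : X), y₀)) ⁻¹' (G n ∩ (F n)ᶜ)) :=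
          ((hGo n).inter (hFcl n).isOpen_compl).preimage
            (continuous_id.prodMk continuous_const)
        have hcont : Continuous fun x => L (gseq n x) (gseq (n + 1) x) (φ n (x, y₀)) :=
          contL _ _ _ (hgseq_cont n hn1) (hgseq_cont (n + 1) (by omega)) ((hφ n hn1).2 y₀)
            (fun w => hgseq_mem n hn1 w) fun w => hgseq_mem (n + 1) (by omega) w
        rw [hveq]
        refine Tendsto.congr' ?_ hcont.continuousAt
        filter_upwards [hVopen.mem_nhds ⟨hGn, hnnF⟩] with x hx
        exact (claim1 n hn1 (x, y₀) ⟨hGsubF n hn1 hx.1, hx.2⟩).symm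
      · -- boundary of the strip
        have hφ0' : φ n (x₀, y₀) = 0 := hφ0 n hn1 _ hGn
        have hfv : f (x₀, y₀) = gseq n x₀ := by
          rw [hveq]
          show L (gseq n x₀) (gseq (n + 1) x₀) (φ n (x₀, y₀)) = gseq n x₀
          rw [hφ0', hL0' n hn1]
        have hx₀V : x₀ ∈ (fun x => ((x : X), y₀)) ⁻¹' (G (n - 1) ∩ (F n)ᶜ) :=
          ⟨hFG (n - 1) hnF, hnnF⟩
        have hVopen : IsOpen ((fun x => ((x : X), y₀)) ⁻¹' (G (n - 1) ∩ (F n)ᶜ)) :=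
          ((hGo (n - 1)).inter (hFcl n).isOpen_compl).preimage
            (continuous_id.prodMk continuous_const)
        have hcont2 : Continuous fun x => L (gseq n x) (gseq (n + 1) x) (φ n (x, y₀)) :=
          contL _ _ _ (hgseq_cont n hn1) (hgseq_cont (n + 1) (by omega)) ((hφ n hn1).2 y₀)
            (fun w => hgseq_mem n hn1 w) fun w => hgseq_mem (n + 1) (by omega) w
        have hT2 : Tendsto (fun x => L (gseq n x) (gseq (n + 1) x) (φ n (x, y₀))) (𝓝 x₀)
            (𝓝 (f (x₀, y₀))) := by
          have h : Tendsto (fun x => L (gseq n x) (gseq (n + 1) x) (φ n (x, y₀))) (𝓝 x₀)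
              (𝓝 (L (gseq n x₀) (gseq (n + 1) x₀) (φ n (x₀, y₀)))) := hcont2.continuousAt
          rwa [← hveq] at h
        by_cases h2n : 2 ≤ n
        · have hcont1 : Continuous fun x =>
              L (gseq (n - 1) x) (gseq (n - 1 + 1) x) (φ (n - 1) (x, y₀)) :=
            contL _ _ _ (hgseq_cont (n - 1) (by omega)) (hgseq_cont (n - 1 + 1) (by omega))
              ((hφ (n - 1) (by omega)).2 y₀)
              (fun w => hgseq_mem (n - 1) (by omega) w)
              fun w => hgseq_mem (n - 1 + 1) (by omega) w
          have hT1 : Tendsto (fun x =>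
              L (gseq (n - 1) x) (gseq (n - 1 + 1) x) (φ (n - 1) (x, y₀))) (𝓝 x₀)
              (𝓝 (f (x₀, y₀))) := by
            have hv1 : L (gseq (n - 1) x₀) (gseq (n - 1 + 1) x₀) (φ (n - 1) (x₀, y₀))
                = f (x₀, y₀) := by
              rw [hφ1 (n - 1) (by omega) _ hnF, hL1' (n - 1) (by omega), hfv,
                show n - 1 + 1 = n by omega]
            have h : Tendsto (fun x => L (gseq (n - 1) x) (gseq (n - 1 + 1) x)
                (φ (n - 1) (x, y₀))) (𝓝 x₀)
                (𝓝 (L (gseq (n - 1) x₀) (gseq (n - 1 + 1) x₀) (φ (n - 1) (x₀, y₀)))) :=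
              hcont1.continuousAt
            rwa [hv1] at h
          refine two_branch hT1 hT2 ?_
          filter_upwards [hVopen.mem_nhds hx₀V] with x hx
          rcases hbranch n hn1 (x, y₀) hx.1 hx.2 with hd | ⟨_, hd⟩
          · exact Or.inr hd
          · exact Or.inl hd
        · refine two_branch hT2 hT2 ?_
          filter_upwards [hVopen.mem_nhds hx₀V] with x hx
          rcases hbranch n hn1 (x, y₀) hx.1 hx.2 with hd | ⟨hge, _⟩
          · exact Or.inr hd
          · omega
end

section
/- Let X be a topological space, Z a Hausdorff topological space, Z₁ ⊆ Z, λ : Z × Z × [0,1] → Z a map with λ(a,b,0) = a for all a,b ∈ Z₁, g : X → Z, (Fₙ)ₙ₌₀^∞ a sequence of subsets of X × X with Δ_X = {(x,x) : x ∈ X} ⊆ Fₙ for all n, and (gₙ)ₙ₌₁^∞ a sequence of mappings gₙ : X → Z₁. Assume that for every x ∈ X, every sequence (tₙ)ₙ₌₁^∞ of points tₙ ∈ [0,1], and every sequence (xₙ)ₙ₌₁^∞ of points xₙ ∈ X with (xₙ, x) ∈ F_{n−1} for all n ≥ 1, one has λ(gₙ(xₙ), g_{n+1}(xₙ), tₙ)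 → g(x) as n → ∞. Then for every pair (x,y) ∈ X × X with (x,y) ∈ Fₙ for all n ≥ 0, one has g(x) = g(y). -/
open Set Filter Topology

theorem stmt2 {X Z : Type*} [TopologicalSpace X] [TopologicalSpace Z] [T2Space Z]
    (Z₁ : Set Z) (L : Z → Z → unitInterval → Z)
    (hL0 : ∀ a ∈ Z₁, ∀ b ∈ Z₁, L a b 0 = a)
    (g : X → Z) (F : ℕ → Set (X × X))
    (hF : ∀ n : ℕ, Set.diagonal X ⊆ F n)
    (gseq : ℕ → X → Z)
    (hgseq_mem : ∀ n : ℕ, 1 ≤ n → ∀ x : X, gseq n x ∈ Z₁)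
    (h3 : ∀ x : X, ∀ t : ℕ → unitInterval, ∀ xs : ℕ → X,
      (∀ n : ℕ, 1 ≤ n → (xs n, x) ∈ F (n - 1)) →
      Tendsto (fun n : ℕ => L (gseq n (xs n)) (gseq (n + 1) (xs n)) (t n)) atTop
        (𝓝 (g x))) :
    ∀ x y : X, (∀ n : ℕ, (x, y) ∈ F n) → g x = g y := by
  intro x y hxy
  have hx := h3 x (fun _ => 0) (fun _ => x) (fun n _ => hF _ rfl)
  have hy := h3 y (fun _ => 0) (fun _ => x) (fun n _ => hxy _)
  have heq : ∀ᶠ n in atTop, L (gseq n x) (gseq (n + 1) x) 0 = gseq n x := by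
    filter_upwards [eventually_ge_atTop 1] with n hn
    exact hL0 _ (hgseq_mem n hn x) _ (hgseq_mem (n+1) (by omega) x)
  have hx' : Tendsto (fun n => gseq n x) atTop (𝓝 (g x)) :=
    Tendsto.congr' heq hx
  have hy' : Tendsto (fun n => gseq n x) atTop (𝓝 (g y)) :=
    Tendsto.congr' heq hy
  exact tendsto_nhds_unique hx' hy'
end

section
/- Let X be a topological space, Z a metrizable topological space, Z₁ ⊆ Z a subset equiconnected in Z witnessed by λ : Z × Z × [0,1] → Z, and g : X → Z a mapping for which there exists a sequence of continuous mappings gₙ : X → Z₁ converging to g pointwise on X. Then there exists a separately continuous mapping f : X × X → Z with diagonal g, i.e. f(x,x) = g(x) for every x ∈ X. -/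
open Set Filter Topology

set_option linter.unusedSectionVars false
set_option linter.unusedVariables false


section Stmt3Aux

variable {X Z : Type*} [TopologicalSpace X] [MetricSpace Z]

noncomputable def s3eps (n : ℕ) : ℝ := (2:ℝ)⁻¹ ^ n

lemma s3eps_pos (n : ℕ) : 0 < s3eps n := pow_pos (by norm_num) n

lemma s3eps_succ (n : ℕ) : s3eps (n+1) = s3eps n / 2 := by
  simp only [s3eps, pow_succ]; ring

lemma s3eps_anti {m n : ℕ} (h : m ≤ n) : s3eps n ≤ s3eps m :=
  pow_le_pow_of_le_one (by norm_num) (by norm_num) h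

noncomputable def s3rho (gs : ℕ → X → Z) : ℕ → X × X → ℝ
  | 0 => fun _ => 0
  | n+1 => fun p => max (s3rho gs n p) (dist (gs (n+1) p.1) (gs (n+1) p.2))

lemma s3rho_zero (gs : ℕ → X → Z) (p : X × X) : s3rho gs 0 p = 0 := rfl

lemma s3rho_mono (gs : ℕ → X → Z) (p : X × X) : Monotone fun n => s3rho gs n p :=
  monotone_nat_of_le_succ fun n => le_max_left _ _

lemma s3rho_nonneg (gs : ℕ → X → Z) (n : ℕ) (p : X × X) : 0 ≤ s3rho gs n p :=
  (le_of_eq (s3rho_zero gs p).symm).trans (s3rho_mono gs p (Nat.zero_le n))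

lemma s3dist_le_rho (gs : ℕ → X → Z) {k n : ℕ} (hk1 : 1 ≤ k) (hkn : k ≤ n) (p : X × X) :
    dist (gs k p.1) (gs k p.2) ≤ s3rho gs n p := by
  induction n with
  | zero => omega
  | succ n ih =>
    rcases Nat.lt_or_ge k (n+1) with h | h
    · exact (ih (by omega)).trans (le_max_left _ _)
    · have hk : k = n+1 := by omega
      subst hk; exact le_max_right _ _

lemma s3rho_cont (gs : ℕ → X → Z) (hg : ∀ k, Continuous (gs k)) (n : ℕ) :
    Continuous (s3rho gs n) := by
  induction n with
  | zero => exact continuous_const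
  | succ n ih =>
    exact ih.max (((hg (n+1)).comp continuous_fst).dist ((hg (n+1)).comp continuous_snd))

lemma s3rho_diag (gs : ℕ → X → Z) (n : ℕ) (x : X) : s3rho gs n (x, x) = 0 := by
  induction n with
  | zero => rfl
  | succ n ih => simp [s3rho, ih]

noncomputable def s3mu (gs : ℕ → X → Z) (n : ℕ) (p : X × X) : unitInterval :=
  Set.projIcc (0:ℝ) 1 zero_le_one (2 - 2 * s3rho gs n p / s3eps n)

lemma s3mu_cont (gs : ℕ → X → Z) (hg : ∀ k, Continuous (gs k)) (n : ℕ) :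
    Continuous (s3mu gs n) :=
  continuous_projIcc.comp
    (continuous_const.sub ((continuous_const.mul (s3rho_cont gs hg n)).div_const _))

lemma s3mu_eq_one_iff (gs : ℕ → X → Z) (n : ℕ) (p : X × X) :
    s3mu gs n p = 1 ↔ s3rho gs n p ≤ s3eps n / 2 := by
  have he := s3eps_pos n
  have key : (1:ℝ) ≤ 2 - 2 * s3rho gs n p / s3eps n ↔ s3rho gs n p ≤ s3eps n / 2 := by
    rw [show (1:ℝ) ≤ 2 - 2 * s3rho gs n p / s3eps n ↔ 2 * s3rho gs n p / s3eps n ≤ 1 from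
      by constructor <;> intro <;> linarith, div_le_one he]
    constructor <;> intro <;> linarith
  constructor
  · intro h
    have hc : (s3mu gs n p : ℝ) = 1 := by rw [h]; rfl
    simp only [s3mu, Set.coe_projIcc] at hc
    rw [← key]
    by_contra hlt
    push_neg at hlt
    have : (0:ℝ) ⊔ ((1:ℝ) ⊓ (2 - 2 * s3rho gs n p / s3eps n)) < 1 :=
      max_lt one_pos ((min_le_right _ _).trans_lt hlt)
    rw [hc] at this
    exact lt_irrefl _ this
  · intro h
    have h1 : (1:ℝ) ≤ 2 - 2 * s3rho gs n p / s3eps n := key.mpr h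
    have := Set.projIcc_of_right_le (a := (0:ℝ)) (h := zero_le_one) h1
    rw [s3mu, this]; rfl

lemma s3mu_eq_zero_iff (gs : ℕ → X → Z) (n : ℕ) (p : X × X) :
    s3mu gs n p = 0 ↔ s3eps n ≤ s3rho gs n p := by
  have he := s3eps_pos n
  have key : 2 - 2 * s3rho gs n p / s3eps n ≤ 0 ↔ s3eps n ≤ s3rho gs n p := by
    rw [show (2:ℝ) - 2 * s3rho gs n p / s3eps n ≤ 0 ↔ 2 ≤ 2 * s3rho gs n p / s3eps n from
      by constructor <;> intro <;> linarith, le_div_iff₀ he]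
    constructor <;> intro <;> linarith
  constructor
  · intro h
    have hc : (s3mu gs n p : ℝ) = 0 := by rw [h]; rfl
    simp only [s3mu, Set.coe_projIcc] at hc
    rw [← key]
    by_contra hlt
    push_neg at hlt
    have : (0:ℝ) < (0:ℝ) ⊔ ((1:ℝ) ⊓ (2 - 2 * s3rho gs n p / s3eps n)) :=
      lt_max_of_lt_right (lt_min one_pos hlt)
    rw [hc] at this
    exact lt_irrefl _ this
  · intro h
    have h0 : 2 - 2 * s3rho gs n p / s3eps n ≤ 0 := key.mpr h
    have := Set.projIcc_of_le_left (b := (1:ℝ)) (h := zero_le_one) h0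
    rw [s3mu, this]; rfl

lemma s3mu_zero (gs : ℕ → X → Z) (p : X × X) : s3mu gs 0 p = 1 := by
  rw [s3mu_eq_one_iff, s3rho_zero]
  have := s3eps_pos 0
  linarith

lemma s3mu_diag (gs : ℕ → X → Z) (n : ℕ) (x : X) : s3mu gs n (x, x) = 1 := by
  rw [s3mu_eq_one_iff, s3rho_diag]
  have := s3eps_pos n
  linarith

noncomputable def s3G (L : Z → Z → unitInterval → Z) (gs : ℕ → X → Z) : ℕ → X × X → Z
  | 0 => fun p => gs 0 p.1
  | n+1 => fun p => L (s3G L gs n p) (gs (n+1) p.1) (s3mu gs (n+1) p)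

variable (L : Z → Z → unitInterval → Z) (gs : ℕ → X → Z) (Z₁ : Set Z)

lemma s3G_mem (hm : ∀ n x, gs n x ∈ Z₁)
    (hA : ∀ a ∈ Z₁, ∀ b ∈ Z₁, ∀ t : unitInterval, L a b t ∈ Z₁) (n : ℕ) (p : X × X) :
    s3G L gs n p ∈ Z₁ := by
  induction n with
  | zero => exact hm 0 p.1
  | succ n ih => exact hA _ ih _ (hm (n+1) p.1) _

lemma s3G_cont (hg : ∀ k, Continuous (gs k)) (hm : ∀ n x, gs n x ∈ Z₁)
    (hA : ∀ a ∈ Z₁, ∀ b ∈ Z₁, ∀ t : unitInterval, L a b t ∈ Z₁)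
    (hLc : ContinuousOn (fun q : (Z × Z) × unitInterval => L q.1.1 q.1.2 q.2)
      (((Z₁ ×ˢ Z₁) ∪ Set.diagonal Z) ×ˢ (Set.univ : Set unitInterval)))
    (n : ℕ) : Continuous (s3G L gs n) := by
  induction n with
  | zero => exact (hg 0).comp continuous_fst
  | succ n ih =>
    have hinner : Continuous fun p : X × X =>
        (((s3G L gs n p, gs (n+1) p.1), s3mu gs (n+1) p) : (Z × Z) × unitInterval) :=
      (ih.prodMk ((hg (n+1)).comp continuous_fst)).prodMk (s3mu_cont gs hg (n+1))
    have hmap : ∀ p : X × X, (((s3G L gs n p, gs (n+1) p.1), s3mu gs (n+1) p) :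
        (Z × Z) × unitInterval) ∈
        (((Z₁ ×ˢ Z₁) ∪ Set.diagonal Z) ×ˢ (Set.univ : Set unitInterval)) :=
      fun p => ⟨Or.inl ⟨s3G_mem L gs Z₁ hm hA n p, hm (n+1) p.1⟩, trivial⟩
    exact hLc.comp_continuous hinner hmap

lemma s3G_collapse (hm : ∀ n x, gs n x ∈ Z₁)
    (hA : ∀ a ∈ Z₁, ∀ b ∈ Z₁, ∀ t : unitInterval, L a b t ∈ Z₁)
    (h4 : ∀ a ∈ Z₁, ∀ b ∈ Z₁, L a b 1 = b) {m : ℕ} {p : X × X}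
    (h : s3mu gs m p = 1) : s3G L gs m p = gs m p.1 := by
  cases m with
  | zero => rfl
  | succ m =>
    show L (s3G L gs m p) (gs (m+1) p.1) (s3mu gs (m+1) p) = _
    rw [h]
    exact h4 _ (s3G_mem L gs Z₁ hm hA m p) _ (hm (m+1) p.1)

lemma s3G_stab (hm : ∀ n x, gs n x ∈ Z₁)
    (hA : ∀ a ∈ Z₁, ∀ b ∈ Z₁, ∀ t : unitInterval, L a b t ∈ Z₁)
    (h3 : ∀ a ∈ Z₁, ∀ b ∈ Z₁, L a b 0 = a) {N : ℕ} {p : X × X}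
    (hmu : s3mu gs (N+1) p ≠ 1) :
    ∀ m, N+1 ≤ m → s3G L gs m p = s3G L gs (N+1) p := by
  intro m hmn
  induction m with
  | zero => omega
  | succ m ih =>
    rcases Nat.lt_or_ge (N+1) (m+1) with h | h
    · have hm1 : N + 1 ≤ m := by omega
      have hz : s3mu gs (m+1) p = 0 := by
        rw [s3mu_eq_zero_iff]
        have h1 : s3eps (N+1) / 2 < s3rho gs (N+1) p := by
          by_contra hc; push_neg at hc
          exact hmu ((s3mu_eq_one_iff gs (N+1) p).mpr hc)
        have h2 : s3rho gs (N+1) p ≤ s3rho gs (m+1) p := s3rho_mono gs p (by omega)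
        have h3' : s3eps (m+1) ≤ s3eps (N+2) := s3eps_anti (by omega)
        have h4' := s3eps_succ (N+1)
        linarith
      show L (s3G L gs m p) (gs (m+1) p.1) (s3mu gs (m+1) p) = _
      rw [hz, h3 _ (s3G_mem L gs Z₁ hm hA m p) _ (hm (m+1) p.1), ih hm1]
    · have he : N + 1 = m + 1 := by omega
      rw [he]

noncomputable def s3f [Nonempty Z] (L : Z → Z → unitInterval → Z) (gs : ℕ → X → Z)
    (p : X × X) : Z :=
  limUnder atTop fun m => s3G L gs m p

lemma s3f_eq_G [Nonempty Z] (hm : ∀ n x, gs n x ∈ Z₁)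
    (hA : ∀ a ∈ Z₁, ∀ b ∈ Z₁, ∀ t : unitInterval, L a b t ∈ Z₁)
    (h3 : ∀ a ∈ Z₁, ∀ b ∈ Z₁, L a b 0 = a) {m : ℕ} {p : X × X}
    (hmu : s3mu gs m p ≠ 1) : s3f L gs p = s3G L gs m p := by
  classical
  have hex : ∃ n, s3mu gs n p ≠ 1 := ⟨m, hmu⟩
  have hspec : s3mu gs (Nat.find hex) p ≠ 1 := Nat.find_spec hex
  have hpos : 1 ≤ Nat.find hex := by
    by_contra hc
    push_neg at hc
    have h0 : Nat.find hex = 0 := by omega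
    rw [h0] at hspec
    exact hspec (s3mu_zero gs p)
  obtain ⟨N, hN⟩ : ∃ N, Nat.find hex = N + 1 := ⟨Nat.find hex - 1, by omega⟩
  have hspec' : s3mu gs (N+1) p ≠ 1 := hN ▸ hspec
  have hstab := s3G_stab L gs Z₁ hm hA h3 hspec'
  have ht : Tendsto (fun m => s3G L gs m p) atTop (𝓝 (s3G L gs (N+1) p)) :=
    tendsto_atTop_of_eventually_const (i₀ := N+1) fun i hi => hstab i hi
  rw [s3f, ht.limUnder_eq]
  have hm0 : N + 1 ≤ m := by
    have := Nat.find_min' hex hmu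
    omega
  exact (hstab m hm0).symm

lemma s3f_inf [Nonempty Z] (hm : ∀ n x, gs n x ∈ Z₁)
    (hA : ∀ a ∈ Z₁, ∀ b ∈ Z₁, ∀ t : unitInterval, L a b t ∈ Z₁)
    (h4 : ∀ a ∈ Z₁, ∀ b ∈ Z₁, L a b 1 = b) {p : X × X} {z : Z}
    (h : ∀ n, s3mu gs n p = 1)
    (hg : Tendsto (fun m => gs m p.1) atTop (𝓝 z)) : s3f L gs p = z := by
  have hc : ∀ m, s3G L gs m p = gs m p.1 :=
    fun m => s3G_collapse L gs Z₁ hm hA h4 (h m)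
  have ht : Tendsto (fun m => s3G L gs m p) atTop (𝓝 z) :=
    hg.congr fun m => (hc m).symm
  rw [s3f, ht.limUnder_eq]

lemma s3f_formula [Nonempty Z] (hm : ∀ n x, gs n x ∈ Z₁)
    (hA : ∀ a ∈ Z₁, ∀ b ∈ Z₁, ∀ t : unitInterval, L a b t ∈ Z₁)
    (h3 : ∀ a ∈ Z₁, ∀ b ∈ Z₁, L a b 0 = a)
    (h4 : ∀ a ∈ Z₁, ∀ b ∈ Z₁, L a b 1 = b) {p : X × X}
    (hex : ∃ n, s3mu gs n p ≠ 1) :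
    ∃ N, (∀ k, k ≤ N → s3mu gs k p = 1) ∧ s3mu gs (N+1) p ≠ 1 ∧
      s3f L gs p = L (gs N p.1) (gs (N+1) p.1) (s3mu gs (N+1) p) := by
  classical
  have hspec : s3mu gs (Nat.find hex) p ≠ 1 := Nat.find_spec hex
  have hpos : 1 ≤ Nat.find hex := by
    by_contra hc
    push_neg at hc
    have h0 : Nat.find hex = 0 := by omega
    rw [h0] at hspec
    exact hspec (s3mu_zero gs p)
  obtain ⟨N, hN⟩ : ∃ N, Nat.find hex = N + 1 := ⟨Nat.find hex - 1, by omega⟩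
  have hspec' : s3mu gs (N+1) p ≠ 1 := hN ▸ hspec
  have hall : ∀ k, k ≤ N → s3mu gs k p = 1 := by
    intro k hk
    by_contra hne
    have := Nat.find_min' hex hne
    omega
  refine ⟨N, hall, hspec', ?_⟩
  rw [s3f_eq_G L gs Z₁ hm hA h3 hspec']
  show L (s3G L gs N p) (gs (N+1) p.1) (s3mu gs (N+1) p) = _
  rw [s3G_collapse L gs Z₁ hm hA h4 (hall N le_rfl)]

lemma s3L_tube
    (hLc : ContinuousOn (fun q : (Z × Z) × unitInterval => L q.1.1 q.1.2 q.2)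
      (((Z₁ ×ˢ Z₁) ∪ Set.diagonal Z) ×ˢ (Set.univ : Set unitInterval)))
    (h5 : ∀ z : Z, ∀ t : unitInterval, L z z t = z) (z : Z) {ε : ℝ} (hε : 0 < ε) :
    ∃ δ > 0, ∀ a ∈ Z₁, ∀ b ∈ Z₁, dist a z < δ → dist b z < δ →
      ∀ t : unitInterval, dist (L a b t) z < ε := by
  classical
  set S := (((Z₁ ×ˢ Z₁) ∪ Set.diagonal Z) ×ˢ (Set.univ : Set unitInterval)) with hS
  set U := Metric.ball z ε with hU
  have hmemS : ∀ t : unitInterval, (((z, z), t) : (Z × Z) × unitInterval) ∈ S :=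
    fun t => ⟨Or.inr rfl, trivial⟩
  have hO : ∀ t : unitInterval, ∃ O : Set ((Z × Z) × unitInterval),
      IsOpen O ∧ ((z,z),t) ∈ O ∧ ∀ q ∈ O ∩ S, L q.1.1 q.1.2 q.2 ∈ U := by
    intro t
    have hcw := hLc _ (hmemS t)
    have hUmem : U ∈ 𝓝 (L z z t) := by
      rw [h5]
      exact Metric.isOpen_ball.mem_nhds (Metric.mem_ball_self hε)
    have hnb : (fun q : (Z × Z) × unitInterval => L q.1.1 q.1.2 q.2) ⁻¹' U ∈
        𝓝[S] (((z,z),t) : (Z × Z) × unitInterval) := hcw hUmem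
    rw [mem_nhdsWithin] at hnb
    obtain ⟨O, hOopen, hOmem, hsub⟩ := hnb
    exact ⟨O, hOopen, hOmem, fun q hq => hsub hq⟩
  choose O hOopen hOmem hOsub using hO
  have hK : IsCompact (({(z,z)} : Set (Z × Z)) ×ˢ (Set.univ : Set unitInterval)) :=
    isCompact_singleton.prod isCompact_univ
  have hcover : (({(z,z)} : Set (Z × Z)) ×ˢ (Set.univ : Set unitInterval)) ⊆
      ⋃ t : unitInterval, O t := by
    rintro ⟨q, t⟩ ⟨hq, -⟩
    rw [Set.mem_singleton_iff] at hq
    subst hq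
    exact Set.mem_iUnion.2 ⟨t, hOmem t⟩
  obtain ⟨s, hs⟩ := hK.elim_finite_subcover O hOopen hcover
  have hOallopen : IsOpen (⋃ t ∈ s, O t) := isOpen_biUnion fun t _ => hOopen t
  have hOallsub : ∀ q ∈ (⋃ t ∈ s, O t) ∩ S, L q.1.1 q.1.2 q.2 ∈ U := by
    rintro q ⟨hq1, hq2⟩
    obtain ⟨t, _, hqt⟩ := Set.mem_iUnion₂.1 hq1
    exact hOsub t q ⟨hqt, hq2⟩
  obtain ⟨u, v, huo, hvo, hzu, htv, huv⟩ :=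
    generalized_tube_lemma isCompact_singleton isCompact_univ hOallopen hs
  obtain ⟨δ, hδ, hball⟩ := Metric.isOpen_iff.1 huo (z, z) (hzu rfl)
  refine ⟨δ, hδ, fun a ha b hb hda hdb t => ?_⟩
  have hqu : ((a, b) : Z × Z) ∈ u := hball (by
    rw [Metric.mem_ball, Prod.dist_eq]
    exact max_lt hda hdb)
  have hOq : (((a,b),t) : (Z × Z) × unitInterval) ∈ ⋃ t ∈ s, O t :=
    huv ⟨hqu, htv trivial⟩
  have hfin : L a b t ∈ U := hOallsub _ ⟨hOq, ⟨Or.inl ⟨ha, hb⟩, trivial⟩⟩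
  simpa [hU, Metric.mem_ball] using hfin

end Stmt3Aux
theorem stmt3 {X Z : Type*} [TopologicalSpace X] [TopologicalSpace Z]
    [TopologicalSpace.MetrizableSpace Z]
    (Z₁ : Set Z) (L : Z → Z → unitInterval → Z) (hL : EquiconnectedIn Z₁ L)
    (g : X → Z) (gseq : ℕ → X → Z)
    (hcont : ∀ n : ℕ, Continuous (gseq n))
    (hmem : ∀ n : ℕ, ∀ x : X, gseq n x ∈ Z₁)
    (hlim : ∀ x : X, Tendsto (fun n : ℕ => gseq n x) atTop (𝓝 (g x))) :
    ∃ f : X × X → Z, SepCont f ∧ ∀ x : X, f (x, x) = g x := by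
  classical
  rcases isEmpty_or_nonempty X with hX | hX
  · exact ⟨fun p => g p.1, ⟨fun x₀ => isEmptyElim x₀, fun y₀ => isEmptyElim y₀⟩,
      fun x => isEmptyElim x⟩
  obtain ⟨hLc, hA, h3, h4, h5⟩ := hL
  letI : MetricSpace Z := TopologicalSpace.metrizableSpaceMetric Z
  haveI : Nonempty Z := ⟨g (Classical.arbitrary X)⟩
  -- the diagonal property
  have hdiag : ∀ x : X, s3f L gseq (x, x) = g x := fun x =>
    s3f_inf L gseq Z₁ hmem hA h4 (fun n => s3mu_diag gseq n x) (hlim x)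
  -- joint continuity at points where some mu is not 1
  have hkey : ∀ p : X × X, (∃ n, s3mu gseq n p ≠ 1) → ContinuousAt (s3f L gseq) p := by
    rintro p ⟨n, hn⟩
    have hopen : IsOpen {q : X × X | s3mu gseq n q ≠ 1} :=
      isOpen_compl_singleton.preimage (s3mu_cont gseq hcont n)
    have hev : s3G L gseq n =ᶠ[𝓝 p] s3f L gseq :=
      eventually_of_mem (hopen.mem_nhds hn) fun q hq =>
        (s3f_eq_G L gseq Z₁ hmem hA h3 hq).symm
    exact ((s3G_cont L gseq Z₁ hcont hmem hA hLc n).continuousAt).congr hev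
  -- gseq's agree at "infinite" points
  have heq0 : ∀ q : X × X, (∀ n, s3mu gseq n q = 1) → ∀ k, 1 ≤ k →
      gseq k q.1 = gseq k q.2 := by
    intro q hq k hk
    have hle : ∀ n, k ≤ n → dist (gseq k q.1) (gseq k q.2) ≤ s3eps n / 2 := fun n hn =>
      (s3dist_le_rho gseq hk hn q).trans ((s3mu_eq_one_iff gseq n q).1 (hq n))
    have htend : Tendsto (fun n => s3eps n / 2) atTop (𝓝 0) := by
      have h1 : Tendsto s3eps atTop (𝓝 0) :=
        tendsto_pow_atTop_nhds_zero_of_lt_one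
          (by norm_num : (0:ℝ) ≤ 2⁻¹) (by norm_num : (2:ℝ)⁻¹ < 1)
      simpa using h1.div_const 2
    have hd : dist (gseq k q.1) (gseq k q.2) ≤ 0 := by
      apply ge_of_tendsto htend
      filter_upwards [eventually_ge_atTop k] with n hn using hle n hn
    exact dist_le_zero.1 hd
  have hgeq : ∀ q : X × X, (∀ n, s3mu gseq n q = 1) → g q.1 = g q.2 := by
    intro q hq
    have h1 : Tendsto (fun n => gseq n q.1) atTop (𝓝 (g q.2)) := by
      apply (hlim q.2).congr'
      filter_upwards [eventually_ge_atTop 1] with n hn using (heq0 q hq n hn).symm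
    exact tendsto_nhds_unique (hlim q.1) h1
  -- membership of neighborhoods at infinite points
  have hWmem : ∀ (p : X × X) (n₁ : ℕ), (∀ n, s3mu gseq n p = 1) →
      s3rho gseq n₁ p < s3eps n₁ / 2 := by
    intro p n₁ hfin
    have h1 := (s3mu_eq_one_iff gseq (n₁+1) p).1 (hfin (n₁+1))
    have h2 : s3rho gseq n₁ p ≤ s3rho gseq (n₁+1) p := s3rho_mono gseq _ (Nat.le_succ n₁)
    have h3' := s3eps_succ n₁
    have h4' := s3eps_pos n₁
    linarith
  have hmukgen : ∀ (p : X × X) (n₁ : ℕ), s3rho gseq n₁ p < s3eps n₁ / 2 →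
      ∀ k, k ≤ n₁ → s3mu gseq k p = 1 := by
    intro p n₁ hp k hk
    rw [s3mu_eq_one_iff]
    have h1 := s3rho_mono gseq p hk
    have h2 := s3eps_anti hk
    linarith
  refine ⟨s3f L gseq, ⟨?_, ?_⟩, hdiag⟩
  · -- first sections
    intro x₀
    rw [continuous_iff_continuousAt]
    intro y₀
    by_cases hfin : ∃ n, s3mu gseq n (x₀, y₀) ≠ 1
    · have hco : ContinuousAt (fun y : X => ((x₀, y) : X × X)) y₀ :=
        (continuous_const.prodMk continuous_id).continuousAt
      exact ContinuousAt.comp (g := s3f L gseq)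
        (f := fun y : X => ((x₀, y) : X × X)) (hkey _ hfin) hco
    · push_neg at hfin
      have hval : s3f L gseq (x₀, y₀) = g x₀ :=
        s3f_inf L gseq Z₁ hmem hA h4 hfin (hlim x₀)
      have hgoal : Tendsto (fun y => s3f L gseq (x₀, y)) (𝓝 y₀) (𝓝 (g x₀)) := by
        rw [Metric.tendsto_nhds]
        intro ε hε
        obtain ⟨δ, hδ, htube⟩ := s3L_tube L Z₁ hLc h5 (g x₀) hε
        obtain ⟨n₁, hn₁⟩ := Metric.tendsto_atTop.1 (hlim x₀) δ hδ
        have hWopen : IsOpen {y : X | s3rho gseq n₁ (x₀, y) < s3eps n₁ / 2} :=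
          isOpen_Iio.preimage
            ((s3rho_cont gseq hcont n₁).comp (continuous_const.prodMk continuous_id))
        filter_upwards [hWopen.mem_nhds (hWmem (x₀, y₀) n₁ hfin)] with y hy
        have hmuk := hmukgen (x₀, y) n₁ hy
        by_cases hc : ∀ n, s3mu gseq n (x₀, y) = 1
        · rw [s3f_inf L gseq Z₁ hmem hA h4 hc (hlim x₀)]
          simpa using hε
        · push_neg at hc
          obtain ⟨N, hall, hne, hfy⟩ := s3f_formula L gseq Z₁ hmem hA h3 h4 hc
          have hN : n₁ ≤ N := by
            by_contra hNlt
            push_neg at hNlt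
            exact hne (hmuk (N+1) (by omega))
          rw [hfy]
          exact htube _ (hmem N x₀) _ (hmem (N+1) x₀) (hn₁ N hN) (hn₁ (N+1) (by omega)) _
      simpa [ContinuousAt, hval] using hgoal
  · -- second sections
    intro y₀
    rw [continuous_iff_continuousAt]
    intro x₀
    by_cases hfin : ∃ n, s3mu gseq n (x₀, y₀) ≠ 1
    · have hco : ContinuousAt (fun x : X => ((x, y₀) : X × X)) x₀ :=
        (continuous_id.prodMk continuous_const).continuousAt
      exact ContinuousAt.comp (g := s3f L gseq)
        (f := fun x : X => ((x, y₀) : X × X)) (hkey _ hfin) hco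
    · push_neg at hfin
      have hval : s3f L gseq (x₀, y₀) = g x₀ :=
        s3f_inf L gseq Z₁ hmem hA h4 hfin (hlim x₀)
      have hxy : g x₀ = g y₀ := hgeq (x₀, y₀) hfin
      have hgoal : Tendsto (fun x => s3f L gseq (x, y₀)) (𝓝 x₀) (𝓝 (g x₀)) := by
        rw [Metric.tendsto_nhds]
        intro ε hε
        obtain ⟨δ, hδ, htube⟩ := s3L_tube L Z₁ hLc h5 (g x₀) hε
        obtain ⟨na, hna⟩ := Metric.tendsto_atTop.1 (hlim y₀) (δ/2) (by linarith)
        obtain ⟨nb, hnb⟩ := exists_pow_lt_of_lt_one (show (0:ℝ) < δ/2 by linarith)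
          (by norm_num : (2:ℝ)⁻¹ < 1)
        set n₁ := max (max na nb) 1 with hn₁def
        have hn₁1 : 1 ≤ n₁ := le_max_right _ _
        have hn₁a : na ≤ n₁ := le_trans (le_max_left _ _) (le_max_left _ _)
        have hn₁b : nb ≤ n₁ := le_trans (le_max_right _ _) (le_max_left _ _)
        have hepsn₁ : s3eps n₁ < δ/2 := lt_of_le_of_lt (s3eps_anti hn₁b) hnb
        have hWopen : IsOpen {x : X | s3rho gseq n₁ (x, y₀) < s3eps n₁ / 2} :=
          isOpen_Iio.preimage
            ((s3rho_cont gseq hcont n₁).comp (continuous_id.prodMk continuous_const))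
        filter_upwards [hWopen.mem_nhds (hWmem (x₀, y₀) n₁ hfin)] with x hx
        have hmuk := hmukgen (x, y₀) n₁ hx
        by_cases hc : ∀ n, s3mu gseq n (x, y₀) = 1
        · rw [s3f_inf L gseq Z₁ hmem hA h4 hc (hlim x)]
          have hgx : g x = g x₀ := (hgeq (x, y₀) hc).trans hxy.symm
          rw [hgx]
          simpa using hε
        · push_neg at hc
          obtain ⟨N, hall, hne, hfy⟩ := s3f_formula L gseq Z₁ hmem hA h3 h4 hc
          have hN : n₁ ≤ N := by
            by_contra hNlt
            push_neg at hNlt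
            exact hne (hmuk (N+1) (by omega))
          have hN1 : 1 ≤ N := le_trans hn₁1 hN
          have hepsN : s3eps N ≤ s3eps n₁ := s3eps_anti hN
          have hda : dist (gseq N x) (g x₀) < δ := by
            have hd1 : dist (gseq N x) (gseq N y₀) ≤ s3eps N / 2 :=
              (s3dist_le_rho gseq hN1 le_rfl (x, y₀)).trans
                ((s3mu_eq_one_iff gseq N (x, y₀)).1 (hall N le_rfl))
            have hd2 : dist (gseq N y₀) (g y₀) < δ/2 := hna N (le_trans hn₁a hN)
            calc dist (gseq N x) (g x₀) = dist (gseq N x) (g y₀) := by rw [hxy]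
            _ ≤ dist (gseq N x) (gseq N y₀) + dist (gseq N y₀) (g y₀) := dist_triangle _ _ _
            _ < δ := by linarith
          rw [hfy]
          by_cases hz : s3mu gseq (N+1) (x, y₀) = 0
          · have h0 : L (gseq N x) (gseq (N+1) x) (s3mu gseq (N+1) (x, y₀)) = gseq N x := by
              rw [hz]
              exact h3 _ (hmem N x) _ (hmem (N+1) x)
            rw [show L (gseq N (x, y₀).1) (gseq (N+1) (x, y₀).1) (s3mu gseq (N+1) (x, y₀))
                = L (gseq N x) (gseq N x) (0 : unitInterval) from by
              rw [show (gseq N ((x : X), y₀).1) = gseq N x from rfl] at h0 ⊢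
              rw [h0.trans (h3 _ (hmem N x) _ (hmem N x)).symm]]
            exact htube _ (hmem N x) _ (hmem N x) hda hda _
          · have hrlt : s3rho gseq (N+1) (x, y₀) < s3eps (N+1) := by
              by_contra hc2
              push_neg at hc2
              exact hz ((s3mu_eq_zero_iff gseq (N+1) (x, y₀)).2 hc2)
            have hdb : dist (gseq (N+1) x) (g x₀) < δ := by
              have hd1 : dist (gseq (N+1) x) (gseq (N+1) y₀) ≤ s3rho gseq (N+1) (x, y₀) :=
                s3dist_le_rho gseq (by omega) le_rfl (x, y₀)
              have hd2 : dist (gseq (N+1) y₀) (g y₀) < δ/2 := hna (N+1) (by omega)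
              have he1 : s3eps (N+1) ≤ s3eps n₁ := s3eps_anti (by omega)
              calc dist (gseq (N+1) x) (g x₀) = dist (gseq (N+1) x) (g y₀) := by rw [hxy]
              _ ≤ dist (gseq (N+1) x) (gseq (N+1) y₀) + dist (gseq (N+1) y₀) (g y₀) :=
                dist_triangle _ _ _
              _ < δ := by linarith
            exact htube _ (hmem N x) _ (hmem (N+1) x) hda hdb _
      simpa [ContinuousAt, hval] using hgoal
end

section
/- Define the multi-valued mapping g : (0,1) → Set ℝ by g(x) = ⋃ₙ₌₁^∞ [2n, 2n + x]. Then every value g(x) is a nonempty closed subset of ℝ, and g is not upper continuous at any point x₀ ∈ (0,1); in particular g is discontinuous at every point of (0,1). -/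
open Set Filter Topology

/-- Upper continuity of a multi-valued mapping at a point. -/
def UpperContAt {X Y : Type*} [TopologicalSpace X] [TopologicalSpace Y]
    (F : X → Set Y) (x₀ : X) : Prop :=
  ∀ V : Set Y, IsOpen V → F x₀ ⊆ V → ∃ U ∈ 𝓝 x₀, ∀ x ∈ U, F x ⊆ V

/-- Lower continuity of a multi-valued mapping at a point. -/
def LowerContAt {X Y : Type*} [TopologicalSpace X] [TopologicalSpace Y]
    (F : X → Set Y) (x₀ : X) : Prop :=
  ∀ V : Set Y, IsOpen V → (F x₀ ∩ V).Nonempty → ∃ U ∈ 𝓝 x₀, ∀ x ∈ U, (F x ∩ V).Nonempty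

/-- Continuity of a multi-valued mapping at a point: upper and lower continuity. -/
def MVContAt {X Y : Type*} [TopologicalSpace X] [TopologicalSpace Y]
    (F : X → Set Y) (x₀ : X) : Prop :=
  UpperContAt F x₀ ∧ LowerContAt F x₀

/-- Separate continuity of a multi-valued mapping of two variables. -/
def MVSepCont {X Y : Type*} [TopologicalSpace X] [TopologicalSpace Y]
    (f : X × X → Set Y) : Prop :=
  (∀ x₀ y : X, MVContAt (fun y' => f (x₀, y')) y) ∧
  (∀ y₀ x : X, MVContAt (fun x' => f (x', y₀)) x)

/-- A multi-valued mapping is closed-valued if all its values are nonempty closed sets. -/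
def ClosedValued {X Y : Type*} [TopologicalSpace Y] (f : X → Set Y) : Prop :=
  ∀ x : X, (f x).Nonempty ∧ IsClosed (f x)

theorem stmt6
    (g : ↥(Set.Ioo (0 : ℝ) 1) → Set ℝ)
    (hg : ∀ x : ↥(Set.Ioo (0 : ℝ) 1),
      g x = ⋃ n : ℕ, Set.Icc (2 * ((n : ℝ) + 1)) (2 * ((n : ℝ) + 1) + (x : ℝ))) :
    (∀ x : ↥(Set.Ioo (0 : ℝ) 1), (g x).Nonempty ∧ IsClosed (g x)) ∧
    (∀ x₀ : ↥(Set.Ioo (0 : ℝ) 1), ¬ UpperContAt g x₀) ∧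
    (∀ x₀ : ↥(Set.Ioo (0 : ℝ) 1), ¬ MVContAt g x₀) := by
  have hcv : ∀ x : ↥(Set.Ioo (0 : ℝ) 1), (g x).Nonempty ∧ IsClosed (g x) := by
    intro x
    obtain ⟨hx0, hx1⟩ := x.2
    rw [hg]
    constructor
    · exact ⟨2, Set.mem_iUnion.2 ⟨0, by constructor <;> simp <;> linarith⟩⟩
    · apply LocallyFinite.isClosed_iUnion
      · intro t
        refine ⟨Set.Ioo (t - 1) (t + 1), Ioo_mem_nhds (by linarith) (by linarith), ?_⟩
        apply Set.Finite.subset (Set.finite_Iio ⌈t⌉₊)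
        intro n ⟨y, hy1, hy2⟩
        have h1 : 2 * ((n : ℝ) + 1) ≤ y := hy1.1
        have h2 : y < t + 1 := hy2.2
        have : (n : ℝ) < t := by linarith
        exact Nat.lt_ceil.2 this
      · intro n; exact isClosed_Icc
  have hnuc : ∀ x₀ : ↥(Set.Ioo (0 : ℝ) 1), ¬ UpperContAt g x₀ := by
    intro x₀ huc
    obtain ⟨h0, h1⟩ := x₀.2
    set V : Set ℝ := ⋃ n : ℕ, Set.Ioo (2 * ((n : ℝ) + 1) - 1)
        (2 * ((n : ℝ) + 1) + (x₀ : ℝ) + 1 / ((n : ℝ) + 1)) with hV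
    have hVopen : IsOpen V := isOpen_iUnion fun n => isOpen_Ioo
    have hsub : g x₀ ⊆ V := by
      rw [hg]
      refine Set.iUnion_subset fun n y hy => Set.mem_iUnion.2 ⟨n, ?_⟩
      have hn : (0 : ℝ) < 1 / ((n : ℝ) + 1) := by positivity
      exact ⟨by linarith [hy.1], by linarith [hy.2]⟩
    obtain ⟨U, hU, hUV⟩ := huc V hVopen hsub
    -- find a point x ∈ U with x > x₀
    rw [nhds_induced, Filter.mem_comap] at hU
    obtain ⟨W, hW, hWU⟩ := hU
    obtain ⟨δ, hδ, hball⟩ := Metric.mem_nhds_iff.1 hW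
    set ε := min δ (1 - (x₀ : ℝ)) / 2 with hε
    have hε0 : 0 < ε := by
      have := lt_min hδ (by linarith : (0:ℝ) < 1 - (x₀:ℝ))
      positivity
    have hεδ : ε < δ := by
      have : min δ (1 - (x₀:ℝ)) ≤ δ := min_le_left _ _
      linarith
    have hε1 : (x₀ : ℝ) + ε < 1 := by
      have : min δ (1 - (x₀:ℝ)) ≤ 1 - (x₀:ℝ) := min_le_right _ _
      linarith
    set xv : ℝ := (x₀ : ℝ) + ε with hxv
    have hxmem : xv ∈ Set.Ioo (0:ℝ) 1 := ⟨by linarith, hε1⟩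
    have hxU : (⟨xv, hxmem⟩ : ↥(Set.Ioo (0:ℝ) 1)) ∈ U := by
      apply hWU
      apply hball
      simp only [Metric.mem_ball, Real.dist_eq]
      rw [show xv - (x₀:ℝ) = ε by simp [hxv]] at *
      rw [abs_of_pos hε0]; exact hεδ
    -- choose n with 1/(n+1) < ε
    obtain ⟨n, hn⟩ := exists_nat_gt (1 / ε)
    have hne : 1 / ((n : ℝ) + 1) < ε := by
      rw [div_lt_iff₀ (by positivity)]
      rw [div_lt_iff₀ hε0] at hn
      nlinarith [Nat.cast_nonneg (α := ℝ) n]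
    set p : ℝ := 2 * ((n : ℝ) + 1) + xv with hp
    have hpg : p ∈ g ⟨xv, hxmem⟩ := by
      rw [hg]
      exact Set.mem_iUnion.2 ⟨n, ⟨by linarith, le_refl _⟩⟩
    have hpV := hUV _ hxU hpg
    obtain ⟨m, hpS⟩ := Set.mem_iUnion.1 hpV
    obtain ⟨hlo, hhi⟩ := Set.mem_Ioo.1 hpS
    have hm1 : (0:ℝ) < (m:ℝ) + 1 := by positivity
    have hminv : (0:ℝ) < 1 / ((m:ℝ) + 1) ∧ 1 / ((m:ℝ) + 1) ≤ 1 := by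
      constructor
      · positivity
      · rw [div_le_one hm1]; linarith [Nat.cast_nonneg (α := ℝ) m]
    rcases lt_trichotomy m n with h | h | h
    · have : (m : ℝ) + 1 ≤ (n : ℝ) := by exact_mod_cast Nat.succ_le_of_lt h
      have hx0' : (0:ℝ) < xv := hxmem.1
      nlinarith [hminv.1, hminv.2]
    · subst h
      have : xv > (x₀ : ℝ) + 1 / ((m : ℝ) + 1) := by
        rw [hxv]; linarith
      linarith
    · have : (n : ℝ) + 1 ≤ (m : ℝ) := by exact_mod_cast Nat.succ_le_of_lt h
      have : xv < 1 := hxmem.2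
      linarith
  exact ⟨hcv, hnuc, fun x₀ hc => hnuc x₀ hc.1⟩
end

section
/- There exists a closed-valued separately continuous multi-valued mapping f : [0,1] × [0,1] → Set ℝ whose diagonal g : [0,1] → Set ℝ, g(x) = f(x,x), is discontinuous at every point x ∈ [0,1]. -/
open Set Filter Topology

namespace Stmt7Aux


/-- level of index n -/
def kk (n : ℕ) : ℕ := Nat.log 2 n
/-- center of bump n -/
noncomputable def cc (n : ℕ) : ℝ := (((n - 2 ^ kk n : ℕ) : ℝ) + 1 / 2) / 2 ^ kk n
/-- radius of bump n -/
noncomputable def ww (n : ℕ) : ℝ := (1 / 8 : ℝ) ^ kk n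
/-- bump n -/
noncomputable def bb (n : ℕ) (x : ℝ) : ℝ := max 0 (1 - |x - cc n| / ww n)
/-- height of segment n -/
noncomputable def hh (n : ℕ) (x y : ℝ) : ℝ := min (bb n x) (bb n y) / 2
/-- the multivalued map -/
noncomputable def SS (x y : ℝ) : Set ℝ := ⋃ n : ℕ, Icc (n : ℝ) ((n : ℝ) + hh n x y)

lemma ww_pos (n : ℕ) : 0 < ww n := pow_pos (by norm_num) _

lemma bb_nonneg (n : ℕ) (x : ℝ) : 0 ≤ bb n x := le_max_left _ _

lemma bb_le_one (n : ℕ) (x : ℝ) : bb n x ≤ 1 := by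
  apply max_le (by norm_num)
  have h1 : 0 ≤ |x - cc n| / ww n := div_nonneg (abs_nonneg _) (ww_pos n).le
  linarith

lemma bb_cont (n : ℕ) : Continuous (bb n) := by
  apply continuous_const.max
  exact continuous_const.sub (((continuous_id.sub continuous_const).abs).div_const _)

lemma bb_eq_zero {n : ℕ} {x : ℝ} (h : ww n ≤ |x - cc n|) : bb n x = 0 := by
  apply max_eq_left
  have h0 := ww_pos n
  have h1 : 1 ≤ |x - cc n| / ww n := (one_le_div h0).mpr h
  linarith

lemma bb_center (n : ℕ) : bb n (cc n) = 1 := by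
  unfold bb
  rw [sub_self, abs_zero, zero_div, sub_zero]
  exact max_eq_right zero_le_one

lemma bb_pos_lt {n : ℕ} {x : ℝ} (h : 0 < bb n x) : |x - cc n| < ww n := by
  by_contra hc
  push_neg at hc
  rw [bb_eq_zero hc] at h
  exact lt_irrefl 0 h

lemma hh_nonneg (n : ℕ) (x y : ℝ) : 0 ≤ hh n x y :=
  div_nonneg (le_min (bb_nonneg n x) (bb_nonneg n y)) (by norm_num)

lemma hh_le_half (n : ℕ) (x y : ℝ) : hh n x y ≤ 1 / 2 := by
  have := (min_le_left (bb n x) (bb n y)).trans (bb_le_one n x)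
  unfold hh; linarith

lemma hh_comm (n : ℕ) (x y : ℝ) : hh n x y = hh n y x := by
  unfold hh; rw [min_comm]

lemma hh_self (n : ℕ) (x : ℝ) : hh n x x = bb n x / 2 := by
  unfold hh; rw [min_self]

lemma hh_le_left (n : ℕ) (x y : ℝ) : hh n x y ≤ bb n x / 2 := by
  have := min_le_left (bb n x) (bb n y)
  unfold hh; linarith

lemma nat_mem_SS (n : ℕ) (x y : ℝ) : (n : ℝ) ∈ SS x y :=
  mem_iUnion.mpr ⟨n, left_mem_Icc.mpr (by linarith [hh_nonneg n x y])⟩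

lemma SS_comm (x y : ℝ) : SS x y = SS y x :=
  iUnion_congr fun n => by rw [hh_comm]

lemma SS_closed (x y : ℝ) : IsClosed (SS x y) := by
  apply LocallyFinite.isClosed_iUnion
  · intro z
    refine ⟨Metric.ball z 1, Metric.ball_mem_nhds _ one_pos, ?_⟩
    apply Set.Finite.subset (Set.finite_Iio (⌈z + 1⌉₊))
    rintro n ⟨p, hp1, hp2⟩
    simp only [Set.mem_Iio]
    rw [Nat.lt_ceil]
    have h1 : (n : ℝ) ≤ p := hp1.1
    have h2 : |p - z| < 1 := by
      have := Metric.mem_ball.mp hp2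
      rwa [Real.dist_eq] at this
    rcases abs_lt.mp h2 with ⟨hl, hr⟩
    linarith
  · intro n; exact isClosed_Icc

-- continuation: mv_cont (to be appended inside namespace)
section MV
open Metric


lemma hh_cont (a : ℝ) (n : ℕ) : Continuous fun b : unitInterval => hh n a (b : ℝ) :=
  (continuous_const.min ((bb_cont n).comp continuous_subtype_val)).div_const 2

lemma mv_upper (a : ℝ) (b₀ : unitInterval) :
    UpperContAt (fun b : unitInterval => SS a (b : ℝ)) b₀ := by
  intro V hV hsub
  -- margin lemma for any single component
  have hz : ∀ n : ℕ, ∃ ε > 0, ∀ b : unitInterval, hh n a (b : ℝ) < hh n a (b₀ : ℝ) + ε →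
      Icc (n : ℝ) ((n : ℝ) + hh n a (b : ℝ)) ⊆ V := by
    intro n
    have hzV : ((n : ℝ) + hh n a (b₀ : ℝ)) ∈ V := by
      apply hsub
      exact mem_iUnion.mpr ⟨n, ⟨by linarith [hh_nonneg n a (b₀ : ℝ)], le_rfl⟩⟩
    obtain ⟨ε, hε, hball⟩ := Metric.isOpen_iff.mp hV _ hzV
    refine ⟨ε, hε, fun b hb p hp => ?_⟩
    rcases le_or_gt p ((n : ℝ) + hh n a (b₀ : ℝ)) with h | h
    · exact hsub (mem_iUnion.mpr ⟨n, ⟨hp.1, h⟩⟩)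
    · apply hball
      rw [Metric.mem_ball, Real.dist_eq, abs_lt]
      have h2 := hp.2
      constructor <;> linarith
  choose ε hεpos hεprop using hz
  by_cases hab : a = (b₀ : ℝ)
  · refine ⟨univ, univ_mem, fun b _ => ?_⟩
    refine iUnion_subset fun n => ?_
    apply hεprop n b
    have h1 : hh n a (b : ℝ) ≤ hh n a (b₀ : ℝ) := by
      rw [← hab, hh_self]
      exact hh_le_left n a (b : ℝ)
    linarith [hεpos n]
  · set d := |a - (b₀ : ℝ)| with hd
    have hdpos : 0 < d := abs_pos.mpr (sub_ne_zero.mpr hab)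
    set M := ⌈(8 : ℝ) / d⌉₊ + 1 with hM
    refine ⟨Metric.ball b₀ (d / 4) ∩ ⋂ n ∈ Finset.range M,
        {b : unitInterval | hh n a (b : ℝ) < hh n a (b₀ : ℝ) + ε n}, ?_, ?_⟩
    · refine Filter.inter_mem (Metric.ball_mem_nhds _ (by positivity)) ?_
      refine (Filter.biInter_finset_mem _).mpr fun n _ => ?_
      refine (isOpen_lt (hh_cont a n) continuous_const).mem_nhds ?_
      simp only [Set.mem_setOf_eq]
      linarith [hεpos n]
    · rintro b ⟨hb1, hb2⟩
      refine iUnion_subset fun n => ?_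
      rcases lt_or_ge n M with hn | hn
      · have hmem := Set.mem_iInter₂.mp hb2 n (Finset.mem_range.mpr hn)
        exact hεprop n b hmem
      · -- tail components
        have hn1 : 1 ≤ n := le_trans (by omega) hn
        have hn0 : (0 : ℝ) < n := by exact_mod_cast hn1
        have hnc : (8 : ℝ) / d < n := by
          have h1 : (8 : ℝ) / d ≤ ⌈(8 : ℝ) / d⌉₊ := Nat.le_ceil _
          have h2 : ((⌈(8 : ℝ) / d⌉₊ : ℝ) + 1) ≤ n := by exact_mod_cast hn
          linarith
        have h2k : (0 : ℝ) < 2 ^ kk n := by positivity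
        have hpow : (n : ℝ) < 2 ^ kk n * 2 := by
          have h3 := Nat.lt_pow_succ_log_self (by norm_num : 1 < 2) n
          have h4 : (n : ℝ) < (2 : ℝ) ^ (Nat.log 2 n + 1) := by exact_mod_cast h3
          rw [pow_succ] at h4
          exact h4
        have hw2 : ww n ≤ ((2 : ℝ) ^ kk n)⁻¹ := by
          unfold ww
          calc (1 / 8 : ℝ) ^ kk n ≤ (1 / 2 : ℝ) ^ kk n :=
                pow_le_pow_left₀ (by norm_num) (by norm_num) _
            _ = ((2 : ℝ) ^ kk n)⁻¹ := by rw [one_div, inv_pow]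
        have hw3 : ((2 : ℝ) ^ kk n)⁻¹ ≤ 2 / n := by
          rw [inv_eq_one_div, div_le_div_iff₀ h2k hn0]
          linarith
        have hw4 : (2 : ℝ) / n ≤ d / 4 := by
          rw [div_le_div_iff₀ hn0 (by norm_num : (0 : ℝ) < 4)]
          rw [div_lt_iff₀ hdpos] at hnc
          nlinarith
        have hww : ww n ≤ d / 4 := hw2.trans (hw3.trans hw4)
        rcases eq_or_lt_of_le (bb_nonneg n a) with hba | hba
        · -- bb n a = 0
          have h0 : hh n a (b : ℝ) = 0 := by
            unfold hh
            rw [← hba, min_eq_left (bb_nonneg n (b : ℝ))]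
            norm_num
          rw [h0, add_zero, Icc_self]
          intro p hp
          rw [Set.mem_singleton_iff.mp hp]
          exact hsub (nat_mem_SS n a (b₀ : ℝ))
        · -- bb n a > 0, b far from support
          have h1 : |a - cc n| < ww n := bb_pos_lt hba
          have hbd : |(b : ℝ) - (b₀ : ℝ)| < d / 4 := by
            have := Metric.mem_ball.mp hb1
            rw [Subtype.dist_eq, Real.dist_eq] at this
            exact this
          have hbz : bb n (b : ℝ) = 0 := by
            apply bb_eq_zero
            have t1 : |a - (b₀ : ℝ)| ≤ |a - cc n| + |cc n - (b₀ : ℝ)| := abs_sub_le _ _ _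
            have t2 : |cc n - (b₀ : ℝ)| ≤ |cc n - (b : ℝ)| + |(b : ℝ) - (b₀ : ℝ)| := abs_sub_le _ _ _
            have t3 : |cc n - (b : ℝ)| = |(b : ℝ) - cc n| := abs_sub_comm _ _
            rw [← hd] at t1
            linarith
          have h0 : hh n a (b : ℝ) = 0 := by
            unfold hh
            rw [hbz, min_eq_right (bb_nonneg n a)]
            norm_num
          rw [h0, add_zero, Icc_self]
          intro p hp
          rw [Set.mem_singleton_iff.mp hp]
          exact hsub (nat_mem_SS n a (b₀ : ℝ))

lemma mv_lower (a : ℝ) (b₀ : unitInterval) :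
    LowerContAt (fun b : unitInterval => SS a (b : ℝ)) b₀ := by
  rintro V hV ⟨z, hz, hzV⟩
  obtain ⟨n, hn⟩ := mem_iUnion.mp hz
  rcases eq_or_lt_of_le hn.1 with he | hlt
  · refine ⟨univ, univ_mem, fun b _ => ⟨z, ?_, hzV⟩⟩
    rw [← he]
    exact nat_mem_SS n a (b : ℝ)
  · obtain ⟨ε, hε, hball⟩ := Metric.isOpen_iff.mp hV z hzV
    refine ⟨{b : unitInterval | hh n a (b₀ : ℝ) - ε / 2 < hh n a (b : ℝ)},
        (isOpen_lt continuous_const (hh_cont a n)).mem_nhds ?_, fun b hb => ?_⟩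
    · simp only [Set.mem_setOf_eq]; linarith
    · have hb' : hh n a (b₀ : ℝ) - ε / 2 < hh n a (b : ℝ) := hb
      have h1 := hn.2
      refine ⟨min z ((n : ℝ) + hh n a (b : ℝ)), ⟨?_, ?_⟩⟩
      · exact mem_iUnion.mpr ⟨n, ⟨le_min hlt.le (by linarith [hh_nonneg n a (b : ℝ)]),
          min_le_right _ _⟩⟩
      · apply hball
        rw [Metric.mem_ball, Real.dist_eq, abs_lt]
        rcases min_cases z ((n : ℝ) + hh n a (b : ℝ)) with ⟨hm, _⟩ | ⟨hm, hm2⟩ <;>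
          rw [hm] <;> constructor <;> linarith

end MV

section Diag

lemma diag_not_upper (x : unitInterval) :
    ¬ UpperContAt (fun x' : unitInterval => SS (x' : ℝ) (x' : ℝ)) x := by
  intro hu
  obtain ⟨U, hU, hUp⟩ := hu (Metric.thickening (1/4) (SS (x : ℝ) (x : ℝ)))
    Metric.isOpen_thickening (Metric.self_subset_thickening (by norm_num) _)
  obtain ⟨δ, hδ, hball⟩ := Metric.mem_nhds_iff.mp hU
  -- choose the level k
  obtain ⟨k₀, hk₀⟩ := exists_pow_lt_of_lt_one (show (0:ℝ) < δ/2 by linarith)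
    (by norm_num : (1/2 : ℝ) < 1)
  set k := max k₀ 2 with hkdef
  have hk2 : 2 ≤ k := le_max_right _ _
  have hkp : (1/2 : ℝ)^k < δ/2 :=
    lt_of_le_of_lt (pow_le_pow_of_le_one (by norm_num) (by norm_num) (le_max_left _ _)) hk₀
  have hhalfpow : (1/2 : ℝ)^k = ((2:ℝ)^k)⁻¹ := by rw [one_div, inv_pow]
  have h2kpos : (0:ℝ) < (2:ℝ)^k := by positivity
  set K := 2^k with hKdef
  have hK4 : 4 ≤ K := by
    calc 4 = 2^2 := by norm_num
    _ ≤ 2^k := Nat.pow_le_pow_right (by norm_num) hk2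
  have hKcast : ((K:ℕ):ℝ) = (2:ℝ)^k := by push_cast [hKdef]; norm_num
  have hx0 : (0:ℝ) ≤ (x:ℝ) := x.2.1
  have hx1 : (x:ℝ) ≤ 1 := x.2.2
  set j := ⌊(x:ℝ) * 2^k⌋₊ with hjdef
  have hjle : (j:ℝ) ≤ (x:ℝ) * 2^k := Nat.floor_le (by positivity)
  have hjlt : (x:ℝ) * 2^k < (j:ℝ) + 1 := Nat.lt_floor_add_one _
  set i := if j + 2 ≤ K then j + 1 else K - 2 with hidef
  have hiK : i < K := by
    rw [hidef]; split <;> omega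
  -- key bounds on |x*2^k - (i+1/2)|
  have hkey : 1/2 ≤ |(x:ℝ) * 2^k - ((i:ℝ) + 1/2)| ∧ |(x:ℝ) * 2^k - ((i:ℝ) + 1/2)| ≤ 3/2 := by
    by_cases hcase : j + 2 ≤ K
    · have hi' : (i:ℝ) = (j:ℝ) + 1 := by rw [hidef, if_pos hcase]; push_cast; ring
      rw [hi']
      constructor
      · rw [le_abs]; right; linarith
      · rw [abs_le]; constructor <;> linarith
    · have hi' : (i:ℝ) = ((K:ℕ):ℝ) - 2 := by
        rw [hidef, if_neg hcase]
        have : 2 ≤ K := by omega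
        push_cast [Nat.cast_sub this]; ring
      have hjK : K - 1 ≤ j := by omega
      have hjK' : ((K:ℕ):ℝ) - 1 ≤ (j:ℝ) := by
        have h1 : ((K - 1 : ℕ):ℝ) ≤ (j:ℝ) := by exact_mod_cast hjK
        rw [Nat.cast_sub (by omega : 1 ≤ K)] at h1
        simpa using h1
      have hxK : (x:ℝ) * 2^k ≤ ((K:ℕ):ℝ) := by
        rw [hKcast]; nlinarith
      rw [hi']
      constructor
      · rw [le_abs]; left; linarith
      · rw [abs_le]; constructor <;> linarith
  set cstar : ℝ := ((i:ℝ) + 1/2) / 2^k with hcdef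
  have hxc : |(x:ℝ) - cstar| = |(x:ℝ) * 2^k - ((i:ℝ) + 1/2)| / 2^k := by
    rw [hcdef]
    rw [show (x:ℝ) - ((i:ℝ) + 1/2) / 2^k = ((x:ℝ) * 2^k - ((i:ℝ) + 1/2)) / 2^k by
      field_simp]
    rw [abs_div, abs_of_pos h2kpos]
  have hxc1 : ((2:ℝ)^k)⁻¹ / 2 ≤ |(x:ℝ) - cstar| := by
    rw [hxc, show ((2:ℝ)^k)⁻¹ / 2 = (1/2) / (2:ℝ)^k by rw [inv_eq_one_div]; ring]
    gcongr
    exact hkey.1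
  have hxc2 : |(x:ℝ) - cstar| ≤ (3/2) * ((2:ℝ)^k)⁻¹ := by
    rw [hxc, div_le_iff₀ h2kpos]
    have := hkey.2
    rw [mul_assoc, inv_mul_cancel₀ (ne_of_gt h2kpos), mul_one]
    exact this
  have hc0 : 0 ≤ cstar := by rw [hcdef]; positivity
  have hc1 : cstar ≤ 1 := by
    rw [hcdef, div_le_one h2kpos]
    have : (i:ℝ) + 1 ≤ ((K:ℕ):ℝ) := by exact_mod_cast hiK
    rw [hKcast] at this
    linarith
  set x' : unitInterval := ⟨cstar, hc0, hc1⟩ with hx'def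
  have hx'U : x' ∈ U := by
    apply hball
    rw [Metric.mem_ball, Subtype.dist_eq, Real.dist_eq]
    have : |cstar - (x:ℝ)| = |(x:ℝ) - cstar| := abs_sub_comm _ _
    rw [this]
    calc |(x:ℝ) - cstar| ≤ (3/2) * ((2:ℝ)^k)⁻¹ := hxc2
      _ = (3/2) * (1/2:ℝ)^k := by rw [hhalfpow]
      _ < (3/2) * (δ/2) := by nlinarith
      _ < δ := by linarith
  -- the index n* and its data
  set nn := K + i with hnndef
  have hlog : kk nn = k := by
    apply Nat.log_eq_of_pow_le_of_lt_pow
    · rw [hnndef, hKdef]; omega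
    · rw [hnndef, hKdef, pow_succ]; omega
  have hccn : cc nn = cstar := by
    unfold cc
    rw [hlog, hnndef, hKdef, Nat.add_sub_cancel_left]
  have hwwn : ww nn = (1/8:ℝ)^k := by unfold ww; rw [hlog]
  have hbbx : bb nn (x:ℝ) = 0 := by
    apply bb_eq_zero
    rw [hccn, hwwn]
    calc (1/8:ℝ)^k = (1/2:ℝ)^k * (1/4:ℝ)^k := by
          rw [← mul_pow]; norm_num
      _ ≤ (1/2:ℝ)^k * (1/4:ℝ)^1 := by
          apply mul_le_mul_of_nonneg_left (pow_le_pow_of_le_one (by norm_num) (by norm_num)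
            (by omega)) (by positivity)
      _ = ((2:ℝ)^k)⁻¹ / 4 := by rw [hhalfpow]; ring
      _ ≤ ((2:ℝ)^k)⁻¹ / 2 := by
          have : (0:ℝ) ≤ ((2:ℝ)^k)⁻¹ := by positivity
          linarith
      _ ≤ |(x:ℝ) - cstar| := hxc1
  -- the spike point belongs to the diagonal value at x'
  have hmem : ((nn:ℝ) + 1/2) ∈ SS (x' : ℝ) (x' : ℝ) := by
    apply mem_iUnion.mpr
    refine ⟨nn, ?_⟩
    have h1 : hh nn (x' : ℝ) (x' : ℝ) = 1/2 := by
      rw [hh_self]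
      show bb nn cstar / 2 = 1/2
      rw [← hccn, bb_center]
    rw [h1]
    constructor <;> norm_num
  have hsubV := hUp x' hx'U hmem
  obtain ⟨p, hpSS, hdist⟩ := Metric.mem_thickening_iff.mp hsubV
  rw [Real.dist_eq] at hdist
  obtain ⟨m, hm⟩ := mem_iUnion.mp hpSS
  have hple : p ≤ (m:ℝ) + 1/2 := le_trans hm.2 (by linarith [hh_le_half m (x:ℝ) (x:ℝ)])
  have hpge : (m:ℝ) ≤ p := hm.1
  rcases lt_trichotomy m nn with hc | hc | hc
  · have : (m:ℝ) + 1 ≤ (nn:ℝ) := by exact_mod_cast hc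
    rcases abs_lt.mp hdist with ⟨h1, h2⟩
    linarith
  · have h0 : hh m (x:ℝ) (x:ℝ) = 0 := by rw [hc, hh_self, hbbx]; norm_num
    rw [h0, add_zero] at hm
    have hpm : p = (m:ℝ) := le_antisymm hm.2 hm.1
    have hmn : (m:ℝ) = (nn:ℝ) := by exact_mod_cast hc
    rcases abs_lt.mp hdist with ⟨h1, h2⟩
    rw [hpm, hmn] at h1 h2
    linarith
  · have : (nn:ℝ) + 1 ≤ (m:ℝ) := by exact_mod_cast hc
    rcases abs_lt.mp hdist with ⟨h1, h2⟩
    linarith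

end Diag


end Stmt7Aux

theorem stmt7 :
    ∃ f : unitInterval × unitInterval → Set ℝ, ClosedValued f ∧ MVSepCont f ∧
      ∀ x : unitInterval, ¬ MVContAt (fun x' : unitInterval => f (x', x')) x := by
  refine ⟨fun p => Stmt7Aux.SS (p.1 : ℝ) (p.2 : ℝ), ?_, ⟨?_, ?_⟩, ?_⟩
  · intro p
    refine ⟨⟨(0 : ℝ), ?_⟩, Stmt7Aux.SS_closed _ _⟩
    have h := Stmt7Aux.nat_mem_SS 0 (p.1 : ℝ) (p.2 : ℝ)
    simpa using h
  · intro x₀ y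
    exact ⟨Stmt7Aux.mv_upper (x₀ : ℝ) y, Stmt7Aux.mv_lower (x₀ : ℝ) y⟩
  · intro y₀ x
    show MVContAt (fun x' : unitInterval => Stmt7Aux.SS (x' : ℝ) (y₀ : ℝ)) x
    have h : (fun x' : unitInterval => Stmt7Aux.SS (x' : ℝ) (y₀ : ℝ)) =
        fun x' : unitInterval => Stmt7Aux.SS (y₀ : ℝ) (x' : ℝ) :=
      funext fun x' => Stmt7Aux.SS_comm _ _
    rw [h]
    exact ⟨Stmt7Aux.mv_upper (y₀ : ℝ) x, Stmt7Aux.mv_lower (y₀ : ℝ) x⟩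
  · intro x hc
    exact Stmt7Aux.diag_not_upper x hc.1
end

section
/- There exists a closed-valued separately continuous multi-valued mapping f : [0,1] × [0,1] → Set ℝ such that f, regarded as a multi-valued mapping of the product space [0,1] × [0,1], is not jointly continuous at any point (x,x) of the diagonal. Consequently, there is no residual (comeager) subset A ⊆ [0,1] such that f is jointly continuous at every point of the set {(x,x) : x ∈ A}. -/
open Set Filter Topology

noncomputable section Stmt8Aux

namespace Stmt8Aux

/-- A sequence of rationals whose range is `ℚ ∩ [0,1)`, hence dense in `[0,1]`. -/
def mseq (k : ℕ) : ℝ := ((Nat.unpair k).1 : ℝ) / ((Nat.unpair k).1 + (Nat.unpair k).2 + 1)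

def wseq (k : ℕ) : ℝ := (1/2 : ℝ) ^ k

lemma wseq_pos (k : ℕ) : 0 < wseq k := pow_pos (by norm_num) k

lemma mseq_mem (k : ℕ) : mseq k ∈ unitInterval := by
  unfold mseq
  constructor
  · apply div_nonneg (by positivity) (by positivity)
  · rw [div_le_one (by positivity)]
    have : (0:ℝ) ≤ ((Nat.unpair k).2 : ℝ) := Nat.cast_nonneg _
    linarith

lemma mseq_surj (q : ℚ) (h0 : 0 ≤ q) (h1 : q < 1) : ∃ k, mseq k = (q : ℝ) := by
  have hnum : 0 ≤ q.num := Rat.num_nonneg.2 h0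
  have hlt : q.num < (q.den : ℤ) := by
    have hden' : (0:ℝ) < (q.den : ℝ) := by exact_mod_cast q.pos
    have hq1 : ((q.num : ℝ) / (q.den : ℝ)) < 1 := by
      rw [← Rat.cast_def]; exact_mod_cast h1
    have := (div_lt_one hden').1 hq1
    exact_mod_cast this
  refine ⟨Nat.pair q.num.toNat (q.den - q.num.toNat - 1), ?_⟩
  unfold mseq
  rw [Nat.unpair_pair]
  have key : q.num.toNat + (q.den - q.num.toNat - 1) + 1 = q.den := by omega
  have hd : ((q.num.toNat : ℝ)) + ((q.den - q.num.toNat - 1 : ℕ) : ℝ) + 1 = (q.den : ℝ) := by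
    exact_mod_cast key
  simp only
  rw [hd, show ((q.num.toNat : ℝ)) = ((q.num : ℤ) : ℝ) from by
    exact_mod_cast congrArg (fun z : ℤ => (z : ℝ)) (Int.toNat_of_nonneg hnum),
    Rat.cast_def]

lemma exists_peak (x : ℝ) (hx : x ∈ unitInterval) (ε : ℝ) (hε : 0 < ε) :
    ∃ k, mseq k ≠ x ∧ |mseq k - x| < ε := by
  rcases eq_or_lt_of_le hx.1 with h0 | h0
  · -- x = 0 (h0 : 0 = x)
    obtain ⟨q, hq1, hq2⟩ := exists_rat_btwn (lt_min hε one_pos)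
    have hq0 : (0:ℚ) < q := by exact_mod_cast hq1
    have hqlt1 : q < 1 := by
      have : (q:ℝ) < 1 := lt_of_lt_of_le hq2 (min_le_right _ _)
      exact_mod_cast this
    obtain ⟨k, hk⟩ := mseq_surj q hq0.le hqlt1
    refine ⟨k, ?_, ?_⟩
    · rw [hk, ← h0]
      exact_mod_cast hq0.ne'
    · rw [hk, ← h0, sub_zero, abs_of_pos (by exact_mod_cast hq0)]
      exact lt_of_lt_of_le hq2 (min_le_left _ _)
  · -- 0 < x
    have hlo : max 0 (x - ε) < x := max_lt h0 (by linarith)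
    obtain ⟨q, hq1, hq2⟩ := exists_rat_btwn hlo
    have hq0 : (0:ℚ) ≤ q := by
      have : (0:ℝ) ≤ (q:ℝ) := le_of_lt (lt_of_le_of_lt (le_max_left _ _) hq1)
      exact_mod_cast this
    have hqlt1 : q < 1 := by
      have : (q:ℝ) < 1 := lt_of_lt_of_le hq2 hx.2
      exact_mod_cast this
    obtain ⟨k, hk⟩ := mseq_surj q hq0 hqlt1
    refine ⟨k, ?_, ?_⟩
    · rw [hk]; exact ne_of_lt hq2
    · rw [hk, abs_sub_comm, abs_of_pos (by linarith)]
      have : x - ε ≤ max 0 (x - ε) := le_max_right _ _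
      linarith

/-- Tent function of half-width `wseq k` peaked at `mseq k`. -/
def phi (k : ℕ) (u : ℝ) : ℝ := max (1 - |u - mseq k| / wseq k) 0

lemma phi_cont (k : ℕ) : Continuous (phi k) := by
  unfold phi
  exact (continuous_const.sub ((continuous_abs.comp (continuous_id.sub continuous_const)).div_const _)).max continuous_const

lemma phi_nonneg (k : ℕ) (u : ℝ) : 0 ≤ phi k u := le_max_right _ _

lemma phi_le_one (k : ℕ) (u : ℝ) : phi k u ≤ 1 := by
  apply max_le _ zero_le_one
  have h1 : 0 ≤ |u - mseq k| / wseq k := div_nonneg (abs_nonneg _) (wseq_pos k).le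
  linarith

lemma phi_peak (k : ℕ) : phi k (mseq k) = 1 := by
  unfold phi
  rw [sub_self, abs_zero, zero_div, sub_zero]
  exact max_eq_left zero_le_one

lemma phi_eq_one (k : ℕ) (u : ℝ) (h : 1 ≤ phi k u) : u = mseq k := by
  by_contra hne
  have hd : 0 < |u - mseq k| := abs_pos.2 (sub_ne_zero.2 hne)
  have : phi k u < 1 :=
    max_lt (by
      have : 0 < |u - mseq k| / wseq k := div_pos hd (wseq_pos k)
      linarith) one_pos
  linarith

lemma phi_pos_dist (k : ℕ) (u : ℝ) (h : 0 < phi k u) : |u - mseq k| < wseq k := by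
  have : 0 < 1 - |u - mseq k| / wseq k := by
    rcases lt_max_iff.1 h with h' | h'
    · exact h'
    · exact absurd h' (lt_irrefl 0)
  have := (div_lt_one (wseq_pos k)).1 (by linarith)
  exact this

/-- Whisker length at station `k`. -/
def psi (k : ℕ) (x y : ℝ) : ℝ := min (phi k x) (phi k y) / 4

lemma psi_nonneg (k : ℕ) (x y : ℝ) : 0 ≤ psi k x y :=
  div_nonneg (le_min (phi_nonneg k x) (phi_nonneg k y)) (by norm_num)

lemma psi_le_quarter (k : ℕ) (x y : ℝ) : psi k x y ≤ 1/4 := by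
  unfold psi
  have : min (phi k x) (phi k y) ≤ 1 := le_trans (min_le_left _ _) (phi_le_one k x)
  linarith

lemma psi_symm (k : ℕ) (x y : ℝ) : psi k x y = psi k y x := by
  unfold psi; rw [min_comm]

lemma psi_corner (k : ℕ) (x y : ℝ) : psi k x y ≤ psi k x x := by
  unfold psi
  have : min (phi k x) (phi k y) ≤ min (phi k x) (phi k x) := by
    rw [min_self]; exact min_le_left _ _
  linarith

lemma psi_peak (k : ℕ) : psi k (mseq k) (mseq k) = 1/4 := by
  unfold psi
  rw [phi_peak, min_self]

lemma psi_pos_close (k : ℕ) (x y : ℝ) (h : 0 < psi k x y) : |x - y| < 2 * wseq k := by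
  have hmin : 0 < min (phi k x) (phi k y) := by
    unfold psi at h; linarith
  have hx := phi_pos_dist k x (lt_of_lt_of_le hmin (min_le_left _ _))
  have hy := phi_pos_dist k y (lt_of_lt_of_le hmin (min_le_right _ _))
  calc |x - y| ≤ |x - mseq k| + |mseq k - y| := abs_sub_le _ _ _
    _ < wseq k + wseq k := by rw [abs_sub_comm (mseq k) y]; linarith
    _ = 2 * wseq k := by ring

lemma psi_far (k : ℕ) (x y : ℝ) (h : 2 * wseq k ≤ |x - y|) : psi k x y = 0 := by
  by_contra hne
  have hpos : 0 < psi k x y := lt_of_le_of_ne (psi_nonneg k x y) (Ne.symm hne)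
  exact absurd (psi_pos_close k x y hpos) (not_lt.2 h)

lemma psi_cont_y (k : ℕ) (x : ℝ) : Continuous (fun y => psi k x y) := by
  unfold psi
  exact (continuous_const.min (phi_cont k)).div_const _

/-- The whisker bound indexed by the floor. -/
def cc (n : ℤ) (x y : ℝ) : ℝ := if 0 ≤ n then psi n.toNat x y else 0

lemma cc_nonneg (n : ℤ) (x y : ℝ) : 0 ≤ cc n x y := by
  unfold cc; split
  · exact psi_nonneg _ _ _
  · exact le_refl 0

lemma cc_le_quarter (n : ℤ) (x y : ℝ) : cc n x y ≤ 1/4 := by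
  unfold cc; split
  · exact psi_le_quarter _ _ _
  · norm_num

lemma cc_lt_one (n : ℤ) (x y : ℝ) : cc n x y < 1 :=
  lt_of_le_of_lt (cc_le_quarter n x y) (by norm_num)

lemma cc_symm (n : ℤ) (x y : ℝ) : cc n x y = cc n y x := by
  unfold cc; split
  · exact psi_symm _ _ _
  · rfl

lemma cc_corner (n : ℤ) (x y : ℝ) : cc n x y ≤ cc n x x := by
  unfold cc; split
  · exact psi_corner _ _ _
  · exact le_refl 0

lemma cc_cont_y (n : ℤ) (x : ℝ) : Continuous (fun y => cc n x y) := by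
  unfold cc; split
  · exact psi_cont_y _ _
  · exact continuous_const

lemma cc_nat (k : ℕ) (x y : ℝ) : cc (k : ℤ) x y = psi k x y := by
  unfold cc
  rw [if_pos (Int.natCast_nonneg k), Int.toNat_natCast]

/-- The fiber of the multifunction. -/
def Fr (x y : ℝ) : Set ℝ := {t | Int.fract t ≤ cc ⌊t⌋ x y}

lemma Fr_symm (x y : ℝ) : Fr x y = Fr y x := by
  unfold Fr
  ext t
  simp only [mem_setOf_eq, cc_symm]

lemma int_mem_Fr (n : ℤ) (x y : ℝ) : (n : ℝ) ∈ Fr x y := by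
  show Int.fract (n:ℝ) ≤ _
  rw [Int.fract_intCast]
  exact cc_nonneg _ _ _

lemma Fr_nonempty (x y : ℝ) : (Fr x y).Nonempty :=
  ⟨(0:ℝ), by exact_mod_cast int_mem_Fr 0 x y⟩

lemma mem_Fr_add (n : ℤ) (s : ℝ) (h0 : 0 ≤ s) (h1 : s < 1) (x y : ℝ) :
    ((n : ℝ) + s ∈ Fr x y) ↔ s ≤ cc n x y := by
  have hfloor : ⌊(n : ℝ) + s⌋ = n := by
    rw [add_comm, Int.floor_add_intCast, Int.floor_eq_zero_iff.2 ⟨h0, h1⟩, zero_add]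
  have hfract : Int.fract ((n : ℝ) + s) = s := by
    rw [add_comm, Int.fract_add_intCast, Int.fract_eq_self.2 ⟨h0, h1⟩]
  show Int.fract _ ≤ cc ⌊_⌋ x y ↔ _
  rw [hfloor, hfract]

lemma Fr_closed (x y : ℝ) : IsClosed (Fr x y) := by
  rw [← isOpen_compl_iff, isOpen_iff_forall_mem_open]
  intro t ht
  simp only [mem_compl_iff, Fr, mem_setOf_eq, not_le] at ht
  set n := ⌊t⌋ with hn
  refine ⟨Ioo ((n : ℝ) + cc n x y) ((n : ℝ) + 1), ?_, isOpen_Ioo, ?_⟩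
  · intro u hu
    have hfloor : ⌊u⌋ = n := by
      apply Int.floor_eq_iff.2
      constructor
      · have := cc_nonneg n x y; have := hu.1; linarith
      · have := hu.2; linarith
    simp only [mem_compl_iff, Fr, mem_setOf_eq, not_le, hfloor]
    have : Int.fract u = u - (n : ℝ) := by rw [Int.fract, hfloor]
    rw [this]
    have := hu.1
    linarith
  · constructor
    · have : Int.fract t = t - (n:ℝ) := by rw [Int.fract]
      rw [this] at ht
      linarith
    · have h1 : Int.fract t < 1 := Int.fract_lt_one t
      have : Int.fract t = t - (n:ℝ) := by rw [Int.fract]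
      linarith [this ▸ h1]


/-! ### Separate continuity -/

lemma lowerY (x₀ : ℝ) (y₀ : unitInterval) :
    LowerContAt (fun y : unitInterval => Fr x₀ (y : ℝ)) y₀ := by
  intro V hV hne
  obtain ⟨t, htF, htV⟩ := hne
  obtain ⟨ε, εpos, hball⟩ := Metric.isOpen_iff.1 hV t htV
  set n := ⌊t⌋ with hn
  set f0 := Int.fract t with hf0
  have htF' : f0 ≤ cc n x₀ (y₀ : ℝ) := htF
  have hcont : Continuous (fun y : unitInterval => cc n x₀ (y : ℝ)) :=
    (cc_cont_y n x₀).comp continuous_subtype_val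
  refine ⟨(fun y : unitInterval => cc n x₀ (y : ℝ)) ⁻¹' (Metric.ball (cc n x₀ (y₀ : ℝ)) ε),
    ?_, ?_⟩
  · exact (hcont.isOpen_preimage _ Metric.isOpen_ball).mem_nhds
      (by simp [Metric.mem_ball, dist_self, εpos])
  · intro y hy
    set c := cc n x₀ (y : ℝ) with hc
    set s := min f0 c with hs
    have hs0 : 0 ≤ s := le_min (Int.fract_nonneg t) (cc_nonneg _ _ _)
    have hs1 : s < 1 := lt_of_le_of_lt (min_le_left _ _) (Int.fract_lt_one t)
    refine ⟨(n : ℝ) + s, (mem_Fr_add n s hs0 hs1 _ _).2 (min_le_right _ _), ?_⟩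
    apply hball
    rw [Metric.mem_ball, Real.dist_eq]
    have ht' : (n : ℝ) + f0 = t := Int.floor_add_fract t
    have harg : ((n:ℝ) + s) - t = s - f0 := by rw [← ht']; ring
    rw [harg]
    have hyd : |c - cc n x₀ (y₀ : ℝ)| < ε := by
      simpa [Metric.mem_ball, Real.dist_eq, hc] using hy
    rcases le_total f0 c with h | h
    · rw [hs, min_eq_left h, sub_self, abs_zero]; exact εpos
    · rw [hs, min_eq_right h]
      rw [abs_of_nonpos (by linarith : c - f0 ≤ 0)]
      calc -(c - f0) = f0 - c := by ring
        _ ≤ cc n x₀ (y₀:ℝ) - c := by linarith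
        _ ≤ |c - cc n x₀ (y₀:ℝ)| := by rw [abs_sub_comm]; exact le_abs_self _
        _ < ε := hyd

lemma Fr_sub_corner (x y : ℝ) : Fr x y ⊆ Fr x x := by
  intro t ht
  exact le_trans ht (cc_corner _ _ _)

lemma upper_corner (x₀ : unitInterval) :
    UpperContAt (fun y : unitInterval => Fr (x₀ : ℝ) (y : ℝ)) x₀ := by
  intro V hV hsub
  exact ⟨univ, univ_mem, fun y _ => (Fr_sub_corner _ _).trans hsub⟩

lemma upper_off (x₀ : ℝ) (y₀ : unitInterval) (hne : (y₀ : ℝ) ≠ x₀) :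
    UpperContAt (fun y : unitInterval => Fr x₀ (y : ℝ)) y₀ := by
  intro V hV hsub
  set L := |x₀ - (y₀ : ℝ)| with hL
  have hLpos : 0 < L := abs_pos.2 (sub_ne_zero.2 (Ne.symm hne))
  obtain ⟨K, hK⟩ := exists_pow_lt_of_lt_one (show (0:ℝ) < L/4 by linarith)
    (by norm_num : (1/2 : ℝ) < 1)
  have hend : ∀ k : ℕ, ∃ δ > 0, Metric.ball ((k : ℝ) + cc (k:ℤ) x₀ (y₀:ℝ)) δ ⊆ V := by
    intro k
    apply Metric.isOpen_iff.1 hV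
    apply hsub
    have := (mem_Fr_add (k:ℤ) (cc (k:ℤ) x₀ (y₀:ℝ)) (cc_nonneg _ _ _) (cc_lt_one _ _ _)
      x₀ (y₀:ℝ)).2 (le_refl _)
    exact_mod_cast this
  choose δ δpos hδ using hend
  set U : Set unitInterval :=
    {y : unitInterval | |(y:ℝ) - (y₀:ℝ)| < L/2} ∩
      ⋂ k : Fin K, {y : unitInterval | cc ((k:ℕ):ℤ) x₀ (y:ℝ) < cc ((k:ℕ):ℤ) x₀ (y₀:ℝ) + δ k} with hU
  have hUopen : IsOpen U := by
    apply IsOpen.inter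
    · have hco : Continuous (fun y : unitInterval => |(y:ℝ) - (y₀:ℝ)|) :=
        continuous_abs.comp (continuous_subtype_val.sub continuous_const)
      exact isOpen_lt hco continuous_const
    · apply isOpen_iInter_of_finite
      intro k
      exact isOpen_lt ((cc_cont_y _ _).comp continuous_subtype_val) continuous_const
  have hy₀U : y₀ ∈ U := by
    constructor
    · show |(y₀:ℝ) - (y₀:ℝ)| < L/2
      rw [sub_self, abs_zero]; linarith
    · refine mem_iInter.2 fun k => ?_
      show cc _ x₀ (y₀:ℝ) < cc _ x₀ (y₀:ℝ) + δ (k:ℕ)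
      linarith [δpos (k:ℕ)]
  refine ⟨U, hUopen.mem_nhds hy₀U, ?_⟩
  intro y hy t ht
  set n := ⌊t⌋ with hn
  set f0 := Int.fract t with hf0
  have htc : f0 ≤ cc n x₀ (y:ℝ) := ht
  have hf00 : 0 ≤ f0 := Int.fract_nonneg t
  rcases eq_or_lt_of_le hf00 with h0 | h0
  · -- t is an integer
    have hti : t = (n : ℝ) := by
      have h := Int.floor_add_fract t
      rw [← hf0, ← h0, add_zero] at h
      exact h.symm
    rw [hti]
    exact hsub (int_mem_Fr n _ _)
  · have hcpos : 0 < cc n x₀ (y:ℝ) := lt_of_lt_of_le h0 htc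
    have hn0 : 0 ≤ n := by
      by_contra hneg
      simp only [cc, if_neg hneg] at hcpos
      exact lt_irrefl 0 hcpos
    set k := n.toNat with hk
    have hkn : (k : ℤ) = n := Int.toNat_of_nonneg hn0
    have hyd : |(y:ℝ) - (y₀:ℝ)| < L/2 := hy.1
    have hyy : L/2 < |x₀ - (y:ℝ)| := by
      have h2 : L ≤ |x₀ - (y:ℝ)| + |(y:ℝ) - (y₀:ℝ)| := abs_sub_le x₀ (y:ℝ) (y₀:ℝ)
      linarith
    have hkK : k < K := by
      by_contra hge
      push_neg at hge
      have hwm : wseq k ≤ wseq K := by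
        unfold wseq
        exact pow_le_pow_of_le_one (by norm_num) (by norm_num) hge
      have hw : 2 * wseq k ≤ |x₀ - (y:ℝ)| := by
        unfold wseq at hwm
        have : (1/2:ℝ)^K < L/4 := hK
        unfold wseq
        linarith
      have := psi_far k x₀ (y:ℝ) hw
      rw [show cc n x₀ (y:ℝ) = psi k x₀ (y:ℝ) from by rw [← hkn, cc_nat], this] at hcpos
      exact lt_irrefl 0 hcpos
    have hyk : cc ((k:ℕ):ℤ) x₀ (y:ℝ) < cc ((k:ℕ):ℤ) x₀ (y₀:ℝ) + δ k := by
      have h3 := hy.2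
      rw [mem_iInter] at h3
      exact h3 ⟨k, hkK⟩
    rw [hkn] at hyk
    have htn : t = (n:ℝ) + f0 := (Int.floor_add_fract t).symm
    rcases le_total f0 (cc n x₀ (y₀:ℝ)) with hle | hgt
    · apply hsub
      rw [htn]
      exact (mem_Fr_add n f0 hf00 (Int.fract_lt_one t) _ _).2 hle
    · apply hδ k
      rw [Metric.mem_ball, Real.dist_eq, htn]
      have h6 : ((k:ℕ):ℝ) = (n:ℝ) := by exact_mod_cast hkn
      rw [h6]
      have h7 : ((n:ℝ) + f0) - ((n:ℝ) + cc (k:ℤ) x₀ (y₀:ℝ)) = f0 - cc (k:ℤ) x₀ (y₀:ℝ) := by ring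
      rw [hkn] at h7 ⊢
      rw [h7, abs_of_nonneg (by linarith)]
      linarith

/-! ### The multifunction and its properties -/

def ff : unitInterval × unitInterval → Set ℝ := fun p => Fr (p.1 : ℝ) (p.2 : ℝ)

lemma ff_closedValued : ClosedValued ff := fun _ => ⟨Fr_nonempty _ _, Fr_closed _ _⟩

set_option maxHeartbeats 1000000 in
lemma ff_sepCont : MVSepCont ff := by
  constructor
  · intro x₀ y
    show MVContAt (fun y' : unitInterval => Fr (x₀:ℝ) (y':ℝ)) y
    constructor
    · by_cases h : y = x₀
      · subst h
        exact upper_corner y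
      · exact upper_off (x₀ : ℝ) y (fun h' => h (Subtype.ext h'))
    · exact lowerY _ y
  · intro y₀ x
    show MVContAt (fun x' : unitInterval => Fr (x':ℝ) (y₀:ℝ)) x
    have heq : (fun x' : unitInterval => Fr (x':ℝ) (y₀:ℝ))
        = fun x' : unitInterval => Fr (y₀ : ℝ) (x' : ℝ) := by
      funext x'
      exact Fr_symm _ _
    rw [heq]
    constructor
    · by_cases h : x = y₀
      · subst h
        exact upper_corner x
      · exact upper_off (y₀ : ℝ) x (fun h' => h (Subtype.ext h'))
    · exact lowerY _ x

/-! ### Joint discontinuity on the diagonal -/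

def Vadv (x : ℝ) : Set ℝ :=
  {t : ℝ | Int.fract t = 1/4 → 0 ≤ ⌊t⌋ ∧ mseq (⌊t⌋).toNat = x}

lemma Vadv_open (x : ℝ) : IsOpen (Vadv x) := by
  rw [Metric.isOpen_iff]
  intro t₀ ht₀
  set n := ⌊t₀⌋ with hn
  set f0 := Int.fract t₀ with hf0
  have hfr : (n:ℝ) + f0 = t₀ := Int.floor_add_fract t₀
  have hf00 : 0 ≤ f0 := Int.fract_nonneg t₀
  have hf01 : f0 < 1 := Int.fract_lt_one t₀
  rcases eq_or_ne f0 (1/4) with h4 | h4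
  · have hcond' : 0 ≤ n ∧ mseq n.toNat = x := ht₀ (by rw [← hf0]; exact h4)
    refine ⟨1/4, by norm_num, ?_⟩
    intro t htd
    rw [Metric.mem_ball, Real.dist_eq] at htd
    have habs := abs_lt.1 htd
    have hflr : ⌊t⌋ = n := by
      apply Int.floor_eq_iff.2
      constructor
      · linarith [habs.1, hfr, h4]
      · linarith [habs.2]
    intro _
    rw [hflr]
    exact hcond'
  · rcases lt_or_gt_of_ne h4 with hlt | hgt
    · -- f0 < 1/4
      refine ⟨1/4 - f0, by linarith, ?_⟩
      intro t htd
      rw [Metric.mem_ball, Real.dist_eq] at htd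
      have habs := abs_lt.1 htd
      have hne : Int.fract t ≠ 1/4 := by
        rcases le_or_gt (n:ℝ) t with hc | hc
        · have hflr : ⌊t⌋ = n := by
            apply Int.floor_eq_iff.2
            refine ⟨hc, ?_⟩
            linarith [habs.2]
          have : Int.fract t = t - (n:ℝ) := by rw [Int.fract, hflr]
          rw [this]
          intro heq
          linarith [habs.2]
        · have hflr : ⌊t⌋ = n - 1 := by
            apply Int.floor_eq_iff.2
            constructor
            · push_cast
              linarith [habs.1]
            · push_cast
              linarith
          have : Int.fract t = t - ((n:ℝ) - 1) := by
            rw [Int.fract, hflr]; push_cast; ring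
          rw [this]
          intro heq
          linarith [habs.1]
      intro hft
      exact absurd hft hne
    · -- 1/4 < f0
      refine ⟨min (f0 - 1/4) (1 - f0), lt_min (by linarith) (by linarith), ?_⟩
      intro t htd
      rw [Metric.mem_ball, Real.dist_eq] at htd
      have habs := abs_lt.1 htd
      have h1 : t - t₀ < 1 - f0 := lt_of_lt_of_le habs.2 (min_le_right _ _)
      have h2 : -(f0 - 1/4) < t - t₀ := by
        have := habs.1
        have hm : min (f0 - 1/4) (1 - f0) ≤ f0 - 1/4 := min_le_left _ _
        linarith
      have hflr : ⌊t⌋ = n := by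
        apply Int.floor_eq_iff.2
        constructor
        · linarith
        · linarith
      have hfe : Int.fract t = t - (n:ℝ) := by rw [Int.fract, hflr]
      intro hft
      rw [hfe] at hft
      linarith

lemma not_cont (x : unitInterval) : ¬ MVContAt ff (x, x) := by
  rintro ⟨hup, -⟩
  have hFsub : ff (x, x) ⊆ Vadv (x:ℝ) := by
    intro t ht hft
    have hcc : (1/4 : ℝ) ≤ cc ⌊t⌋ (x:ℝ) (x:ℝ) := by rw [← hft]; exact ht
    have h0 : 0 ≤ ⌊t⌋ := by
      by_contra hneg
      simp only [cc, if_neg hneg] at hcc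
      linarith
    refine ⟨h0, ?_⟩
    have hcp : cc ⌊t⌋ (x:ℝ) (x:ℝ) = psi (⌊t⌋).toNat (x:ℝ) (x:ℝ) := by
      simp only [cc, if_pos h0]
    rw [hcp] at hcc
    have hphi : 1 ≤ phi (⌊t⌋).toNat (x:ℝ) := by
      unfold psi at hcc
      rw [min_self] at hcc
      linarith
    exact (phi_eq_one _ _ hphi).symm
  obtain ⟨U, hU, hUsub⟩ := hup (Vadv (x:ℝ)) (Vadv_open _) hFsub
  obtain ⟨ε, εpos, hball⟩ := Metric.mem_nhds_iff.1 hU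
  obtain ⟨k, hkne, hkd⟩ := exists_peak (x:ℝ) x.2 ε εpos
  set z : unitInterval := ⟨mseq k, mseq_mem k⟩ with hz
  have hzU : (z, z) ∈ U := by
    apply hball
    rw [Metric.mem_ball, Prod.dist_eq]
    have hd : dist z x = |mseq k - (x:ℝ)| := by
      rw [Subtype.dist_eq, Real.dist_eq]
    simp only [max_self]
    rw [hd]
    exact hkd
  have hsub := hUsub (z, z) hzU
  have hmem : ((k:ℕ):ℝ) + 1/4 ∈ ff (z, z) := by
    have h := (mem_Fr_add (k:ℤ) (1/4) (by norm_num) (by norm_num) (mseq k) (mseq k)).2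
      (by rw [cc_nat, psi_peak])
    show ((k:ℕ):ℝ) + 1/4 ∈ Fr (mseq k) (mseq k)
    exact_mod_cast h
  have hVm := hsub hmem
  have hfr4 : Int.fract (((k:ℕ):ℝ) + 1/4) = 1/4 := by
    rw [show ((k:ℕ):ℝ) = (((k:ℕ):ℤ):ℝ) from by push_cast; ring, add_comm,
      Int.fract_add_intCast, Int.fract_eq_self.2 ⟨by norm_num, by norm_num⟩]
  have hflr4 : ⌊((k:ℕ):ℝ) + 1/4⌋ = ((k:ℕ):ℤ) := by
    rw [show ((k:ℕ):ℝ) = (((k:ℕ):ℤ):ℝ) from by push_cast; ring, add_comm,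
      Int.floor_add_intCast, Int.floor_eq_zero_iff.2 ⟨by norm_num, by norm_num⟩, zero_add]
  obtain ⟨-, hpk⟩ := hVm hfr4
  rw [hflr4, Int.toNat_natCast] at hpk
  exact hkne hpk

end Stmt8Aux

end Stmt8Aux

theorem stmt8 :
    ∃ f : unitInterval × unitInterval → Set ℝ, ClosedValued f ∧ MVSepCont f ∧
      (∀ x : unitInterval, ¬ MVContAt f (x, x)) ∧
      ¬ ∃ A : Set unitInterval, A ∈ residual unitInterval ∧
          ∀ x ∈ A, MVContAt f (x, x) := by
  refine ⟨Stmt8Aux.ff, Stmt8Aux.ff_closedValued, Stmt8Aux.ff_sepCont, Stmt8Aux.not_cont, ?_⟩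
  rintro ⟨A, hA, hc⟩
  haveI : CompleteSpace unitInterval := isClosed_Icc.completeSpace_coe
  have hdense := dense_of_mem_residual hA
  obtain ⟨x, hx⟩ := hdense.nonempty
  exact Stmt8Aux.not_cont x (hc x hx)
end

section
/- Let Z = {(0,1), (0,−1)} ∪ ⋃ₙ₌₁^∞ {(x, n·x) : x ∈ ℝ} ⊆ ℝ² with the subspace topology, Z₁ = ⋃ₙ₌₁^∞ {(x, n·x) : x ∈ ℝ}, and g : [0,1] → Z defined by g(x) = (0,1) for x ∈ [0,1/2) and g(x) = (0,−1) for x ∈ [1/2,1]. For each n ≥ 1 define gₙ : [0,1] → ℝ² by gₙ(x) = (1/n, 1) for x ∈ [0, (n−1)/(2n)], gₙ(x) = (−4x + (2n−1)/n, −4nx + 2n − 1) for x ∈ ((n−1)/(2n), 1/2], and gₙ(x) = (−1/n, −1) for x ∈ (1/2, 1]. Then each gₙ is continuous, takes all its values in Z₁, and the sequence (gₙ) converges to g pointwise on [0,1]. -/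
open Set Filter Topology

/-- The union of the lines `y = n·x`, `n ≥ 1`. -/
def ZLines : Set (ℝ × ℝ) := {p : ℝ × ℝ | ∃ n : ℕ, 1 ≤ n ∧ p.2 = (n : ℝ) * p.1}

/-- The space `Z = {(0,1), (0,−1)} ∪ ⋃ₙ≥1 {(x, n·x) : x ∈ ℝ}`. -/
def ZSet : Set (ℝ × ℝ) := {((0 : ℝ), (1 : ℝ)), ((0 : ℝ), (-1 : ℝ))} ∪ ZLines

/-!
On `[0,1]` each `gₙ` is the affine map `zigzag n` precomposed with the clamp of `x` to
`[(n-1)/(2n), 1/2]`, so it is continuous, and since the second coordinate of `zigzag n t` is always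
`n` times the first, it runs along the line `y = n·x`. As `(n-1)/(2n) ↑ 1/2`, for every fixed
`x < 1/2` eventually `gₙ(x) = (1/n, 1)`, while for `x ≥ 1/2` always `gₙ(x) = (-1/n, -1)`.
-/

noncomputable def rampStart (n : ℕ) : ℝ := ((n : ℝ) - 1) / (2 * n)

noncomputable def zigzag (n : ℕ) (t : ℝ) : ℝ × ℝ :=
  ((-4 * t + (2 * n - 1) / n : ℝ), (-4 * n * t + 2 * n - 1 : ℝ))

lemma rampStart_le_half (n : ℕ) : rampStart n ≤ 1 / 2 := by
  rcases Nat.eq_zero_or_pos n with rfl | hn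
  · norm_num [rampStart]
  · rw [rampStart, div_le_div_iff₀ (by positivity) two_pos]
    linarith

lemma tendsto_rampStart : Tendsto rampStart atTop (𝓝 (1 / 2)) := by
  have hlim : Tendsto (fun n : ℕ => 1 / 2 * (1 - 1 / (n : ℝ))) atTop (𝓝 (1 / 2)) := by
    simpa using ((tendsto_const_nhds (x := (1 : ℝ))).sub
      tendsto_one_div_atTop_nhds_zero_nat).const_mul (1 / 2 : ℝ)
  refine hlim.congr' ?_
  filter_upwards [eventually_ne_atTop 0] with n hn
  rw [rampStart]
  field_simp

lemma eventually_le_rampStart {x : ℝ} (hx : x < 1 / 2) : ∀ᶠ n in atTop, x ≤ rampStart n :=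
  (tendsto_order.1 tendsto_rampStart).1 x hx |>.mono fun _ => le_of_lt

lemma continuous_zigzag (n : ℕ) : Continuous (zigzag n) := by
  unfold zigzag
  fun_prop

lemma zigzag_mem_ZLines {n : ℕ} (hn : n ≠ 0) (t : ℝ) : zigzag n t ∈ ZLines :=
  ⟨n, Nat.one_le_iff_ne_zero.mpr hn, by simp only [zigzag]; field_simp; ring⟩

lemma zigzag_rampStart {n : ℕ} (hn : n ≠ 0) : zigzag n (rampStart n) = ((1 / n : ℝ), 1) := by
  simp only [zigzag, rampStart, Prod.mk.injEq]
  constructor <;> field_simp <;> ring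

lemma zigzag_half {n : ℕ} (hn : n ≠ 0) : zigzag n (1 / 2) = ((-1 / n : ℝ), -1) := by
  simp only [zigzag, Prod.mk.injEq]
  constructor <;> field_simp <;> ring

lemma eqOn_zigzag_projIcc {f : ℝ → ℝ × ℝ} {n : ℕ} (hn : n ≠ 0)
    (h₁ : ∀ x ∈ Icc 0 (rampStart n), f x = ((1 / n : ℝ), 1))
    (h₂ : ∀ x ∈ Ioc (rampStart n) (1 / 2), f x = zigzag n x)
    (h₃ : ∀ x ∈ Ioc (1 / 2) 1, f x = ((-1 / n : ℝ), -1)) :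
    EqOn f (fun x => zigzag n (projIcc (rampStart n) (1 / 2) (rampStart_le_half n) x))
      (Icc 0 1) := by
  intro x hx
  dsimp only
  rcases le_or_gt x (rampStart n) with hle | hlt
  · rw [h₁ x ⟨hx.1, hle⟩, projIcc_of_le_left _ hle, zigzag_rampStart hn]
  rcases le_or_gt x (1 / 2) with hle' | hlt'
  · rw [h₂ x ⟨hlt, hle'⟩, projIcc_of_mem _ ⟨hlt.le, hle'⟩]
  · rw [h₃ x ⟨hlt', hx.2⟩, projIcc_of_right_le _ hlt'.le, zigzag_half hn]

lemma tendsto_div_natCast_prodMk (c a : ℝ) :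
    Tendsto (fun n : ℕ => (c / n, a)) atTop (𝓝 (0, a)) :=
  (tendsto_const_div_atTop_nhds_zero_nat c).prodMk_nhds tendsto_const_nhds

theorem stmt9 (g : ℝ → ℝ × ℝ) (gn : ℕ → ℝ → ℝ × ℝ)
    (hg1 : ∀ x ∈ Set.Ico (0 : ℝ) (1 / 2), g x = ((0 : ℝ), (1 : ℝ)))
    (hg2 : ∀ x ∈ Set.Icc (1 / 2 : ℝ) 1, g x = ((0 : ℝ), (-1 : ℝ)))
    (hgn1 : ∀ n : ℕ, 1 ≤ n → ∀ x ∈ Set.Icc (0 : ℝ) (((n : ℝ) - 1) / (2 * n)),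
      gn n x = ((1 / n : ℝ), (1 : ℝ)))
    (hgn2 : ∀ n : ℕ, 1 ≤ n → ∀ x ∈ Set.Ioc (((n : ℝ) - 1) / (2 * n)) (1 / 2 : ℝ),
      gn n x = ((-4 * x + (2 * n - 1) / n : ℝ), (-4 * n * x + 2 * n - 1 : ℝ)))
    (hgn3 : ∀ n : ℕ, 1 ≤ n → ∀ x ∈ Set.Ioc (1 / 2 : ℝ) 1,
      gn n x = ((-1 / n : ℝ), (-1 : ℝ))) :
    (∀ n : ℕ, 1 ≤ n → ContinuousOn (gn n) (Set.Icc (0 : ℝ) 1)) ∧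
    (∀ n : ℕ, 1 ≤ n → ∀ x ∈ Set.Icc (0 : ℝ) 1, gn n x ∈ ZLines) ∧
    (∀ x ∈ Set.Icc (0 : ℝ) 1, Tendsto (fun n : ℕ => gn n x) atTop (𝓝 (g x))) := by
  have hf (n : ℕ) (hn : 1 ≤ n) := eqOn_zigzag_projIcc (Nat.one_le_iff_ne_zero.mp hn)
    (hgn1 n hn) (hgn2 n hn) (hgn3 n hn)
  refine ⟨fun n hn => ?_, fun n hn x hx => ?_, fun x hx => ?_⟩
  · exact ((continuous_zigzag n).comp (continuous_subtype_val.comp continuous_projIcc)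
      ).continuousOn.congr (hf n hn)
  · rw [hf n hn hx]
    exact zigzag_mem_ZLines (Nat.one_le_iff_ne_zero.mp hn) _
  rcases lt_or_ge x (1 / 2) with hlt | hge
  · rw [hg1 x ⟨hx.1, hlt⟩]
    refine (tendsto_div_natCast_prodMk 1 1).congr' ?_
    filter_upwards [eventually_ge_atTop 1, eventually_le_rampStart hlt] with n hn hxn
    simp only [hf n hn hx, projIcc_of_le_left _ hxn,
      zigzag_rampStart (Nat.one_le_iff_ne_zero.mp hn)]
  · rw [hg2 x ⟨hge, hx.2⟩]
    refine (tendsto_div_natCast_prodMk (-1) (-1)).congr' ?_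
    filter_upwards [eventually_ge_atTop 1] with n hn
    simp only [hf n hn hx, projIcc_of_right_le _ hge, zigzag_half (Nat.one_le_iff_ne_zero.mp hn)]
end

section
/- Let Z = {(0,1), (0,−1)} ∪ ⋃ₙ₌₁^∞ {(x, n·x) : x ∈ ℝ} ⊆ ℝ² with the subspace topology, and g : [0,1] → Z defined by g(x) = (0,1) for x ∈ [0,1/2) and g(x) = (0,−1) for x ∈ [1/2,1]. Then there is no separately continuous mapping f : [0,1] × [0,1] → Z with f(x,x) = g(x) for every x ∈ [0,1]. -/
open Set Filter Topology

/-- Any preconnected subset of `ZSet` contained in the ball of radius 1/2 around `(0, ε)`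
(ε = ±1) that contains `(0, ε)` is just `{(0, ε)}`. -/
lemma comp_triv (ε : ℝ) (hε : ε = 1 ∨ ε = -1) (C : Set (ℝ × ℝ)) (hC : IsPreconnected C)
    (hsub : C ⊆ ZSet) (hball : ∀ p ∈ C, dist p (((0 : ℝ), ε)) < 1 / 2)
    (hz : (((0 : ℝ), ε)) ∈ C) : ∀ p ∈ C, p = (((0 : ℝ), ε)) := by
  have habs : |ε| = 1 := by rcases hε with h | h <;> simp [h]
  -- a point of C on a line has nonzero first coordinate
  have hsnd : ∀ p ∈ C, 1 / 2 < |p.2| := by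
    intro p hp
    have hd := hball p hp
    rw [Prod.dist_eq] at hd
    have h2 : |p.2 - ε| < 1 / 2 := lt_of_le_of_lt (le_max_right _ _) hd
    have : |ε| - |p.2| ≤ |p.2 - ε| := by
      have := abs_sub_abs_le_abs_sub ε p.2
      rwa [abs_sub_comm] at this
    linarith [habs ▸ this]
  intro p hp
  by_contra hne
  -- p lies on some line n
  have hpz := hsub hp
  have hp2 := hsnd p hp
  obtain ⟨n, hn1, hn2⟩ : ∃ n : ℕ, 1 ≤ n ∧ p.2 = (n : ℝ) * p.1 := by
    rcases hpz with h | h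
    · rcases h with h | h
      · rcases hε with hε' | hε'
        · exact absurd (h.trans (by rw [hε'])) hne
        · exfalso
          have hd := hball p hp
          rw [h, hε'] at hd
          norm_num [Prod.dist_eq, Real.dist_eq] at hd
      · simp only [mem_singleton_iff] at h
        rcases hε with hε' | hε'
        · exfalso
          have hd := hball p hp
          rw [h, hε'] at hd
          norm_num [Prod.dist_eq, Real.dist_eq] at hd
        · exact absurd (h.trans (by rw [hε'])) hne
    · exact h
  have hp1 : p.1 ≠ 0 := by
    intro h0
    rw [h0, mul_zero] at hn2
    rw [hn2] at hp2
    norm_num at hp2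
  -- clopen-type separation using two open sets
  set U : Set (ℝ × ℝ) := {q | |q.2 - (n : ℝ) * q.1| < |q.1|} with hUdef
  set V : Set (ℝ × ℝ) := {q | |q.1| / 2 < |q.2 - (n : ℝ) * q.1|} with hVdef
  have hU : IsOpen U := by
    apply isOpen_lt
    · exact ((continuous_snd.sub (continuous_const.mul continuous_fst)).abs)
    · exact continuous_fst.abs
  have hV : IsOpen V := by
    apply isOpen_lt
    · exact (continuous_fst.abs.div_const 2)
    · exact ((continuous_snd.sub (continuous_const.mul continuous_fst)).abs)
  -- first coordinate of line points in C is nonzero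
  have hlinefst : ∀ q ∈ C, ∀ m : ℕ, q.2 = (m : ℝ) * q.1 → q.1 ≠ 0 := by
    intro q hq m hm h0
    have := hsnd q hq
    rw [hm, h0, mul_zero] at this
    norm_num at this
  have hcover : C ⊆ U ∪ V := by
    intro q hq
    rcases hsub hq with h | h
    · -- q = (0, ±1) : in V
      right
      have hq1 : q.1 = 0 := by
        rcases h with h | h
        · rw [h]
        · simp only [mem_singleton_iff] at h; rw [h]
      have hq2 : |q.2| = 1 := by
        rcases h with h | h
        · rw [h]; norm_num
        · simp only [mem_singleton_iff] at h; rw [h]; norm_num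
      simp only [hVdef, mem_setOf_eq, hq1, mul_zero, sub_zero, abs_zero, hq2]
      norm_num
    · obtain ⟨m, hm1, hm2⟩ := h
      have hq1 : q.1 ≠ 0 := hlinefst q hq m hm2
      by_cases hmn : (m : ℝ) = (n : ℝ)
      · left
        simp only [hUdef, mem_setOf_eq, hm2, ← hmn, sub_self, abs_zero]
        · exact abs_pos.mpr hq1
      · right
        have h1 : |q.2 - (n : ℝ) * q.1| = |(m : ℝ) - n| * |q.1| := by
          rw [hm2, ← sub_mul, abs_mul]
        have h2 : (1 : ℝ) ≤ |(m : ℝ) - n| := by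
          have hne' : (m : ℤ) ≠ (n : ℤ) := by
            intro h; apply hmn; exact_mod_cast congrArg (Int.cast : ℤ → ℝ) h
          have : (1 : ℤ) ≤ |(m : ℤ) - n| := Int.one_le_abs (sub_ne_zero.mpr hne')
          calc (1 : ℝ) ≤ |((m : ℤ) - n : ℤ)| := by exact_mod_cast this
            _ = |(m : ℝ) - n| := by push_cast; rfl
        simp only [hVdef, mem_setOf_eq, h1]
        have := abs_pos.mpr hq1
        nlinarith
  have hCU : (C ∩ U).Nonempty := by
    refine ⟨p, hp, ?_⟩
    simp only [hUdef, mem_setOf_eq, hn2, sub_self, abs_zero]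
    exact abs_pos.mpr hp1
  have hCV : (C ∩ V).Nonempty := by
    refine ⟨((0 : ℝ), ε), hz, ?_⟩
    simp only [hVdef, mem_setOf_eq, mul_zero, sub_zero, abs_zero, habs]
    norm_num
  obtain ⟨q, hqC, hqU, hqV⟩ := hC U V hU hV hcover hCU hCV
  -- contradiction: no point of C is in both U and V
  simp only [hUdef, hVdef, mem_setOf_eq] at hqU hqV
  have hq1 : q.1 ≠ 0 := by
    intro h0
    rw [h0, abs_zero] at hqU
    exact absurd hqU (abs_nonneg _).not_gt
  rcases hsub hqC with h | h
  · have : q.1 = 0 := by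
      rcases h with h | h
      · rw [h]
      · simp only [mem_singleton_iff] at h; rw [h]
    exact hq1 this
  · obtain ⟨m, hm1, hm2⟩ := h
    by_cases hmn : (m : ℝ) = (n : ℝ)
    · rw [hm2, ← hmn, sub_self, abs_zero] at hqV
      have := abs_nonneg q.1
      linarith
    · have h1 : |q.2 - (n : ℝ) * q.1| = |(m : ℝ) - n| * |q.1| := by
        rw [hm2, ← sub_mul, abs_mul]
      have h2 : (1 : ℝ) ≤ |(m : ℝ) - n| := by
        have hne' : (m : ℤ) ≠ (n : ℤ) := by
          intro h; apply hmn; exact_mod_cast congrArg (Int.cast : ℤ → ℝ) h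
        have : (1 : ℤ) ≤ |(m : ℤ) - n| := Int.one_le_abs (sub_ne_zero.mpr hne')
        calc (1 : ℝ) ≤ |((m : ℤ) - n : ℤ)| := by exact_mod_cast this
          _ = |(m : ℝ) - n| := by push_cast; rfl
      rw [h1] at hqU
      nlinarith [abs_nonneg q.1]

/-- Fibers of `(0, ±1)` under continuous maps `[0,1] → Z` are open. -/
lemma fiber_open (ε : ℝ) (hε : ε = 1 ∨ ε = -1) (h : unitInterval → ↥ZSet)
    (hc : Continuous h) :
    IsOpen {t : unitInterval | (h t : ℝ × ℝ) = ((0 : ℝ), ε)} := by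
  rw [Metric.isOpen_iff]
  intro t₀ ht₀
  simp only [mem_setOf_eq] at ht₀
  have hg : Continuous fun t : unitInterval => (h t : ℝ × ℝ) :=
    continuous_subtype_val.comp hc
  obtain ⟨δ, hδ, hcont⟩ := Metric.continuous_iff.mp hg t₀ (1 / 2) (by norm_num)
  refine ⟨δ, hδ, fun t₁ ht₁ => ?_⟩
  rw [Metric.mem_ball] at ht₁
  simp only [mem_setOf_eq]
  -- the connected segment between t₀ and t₁ inside the unit interval
  set S : Set unitInterval := Subtype.val ⁻¹' (uIcc (t₀ : ℝ) (t₁ : ℝ)) with hSdef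
  have hSpre : IsPreconnected S := by
    rw [← Topology.IsInducing.subtypeVal.isPreconnected_image]
    have himg : Subtype.val '' S = uIcc (t₀ : ℝ) (t₁ : ℝ) := by
      rw [hSdef, Subtype.image_preimage_coe]
      exact inter_eq_right.mpr
        ((ordConnected_Icc).uIcc_subset t₀.2 t₁.2)
    rw [himg]
    exact isPreconnected_uIcc
  set C : Set (ℝ × ℝ) := (fun t : unitInterval => (h t : ℝ × ℝ)) '' S with hCdef
  have hCpre : IsPreconnected C := hSpre.image _ hg.continuousOn
  have hCsub : C ⊆ ZSet := by
    rintro p ⟨t, _, rfl⟩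
    exact (h t).2
  have hCball : ∀ p ∈ C, dist p (((0 : ℝ), ε)) < 1 / 2 := by
    rintro p ⟨t, ht, rfl⟩
    have hd : dist (t : ℝ) (t₀ : ℝ) ≤ dist (t₀ : ℝ) (t₁ : ℝ) :=
      Real.dist_le_of_mem_uIcc ht left_mem_uIcc
    have hlt : dist t t₀ < δ := by
      rw [Subtype.dist_eq]
      calc dist (t : ℝ) (t₀ : ℝ) ≤ dist (t₀ : ℝ) (t₁ : ℝ) := hd
        _ = dist t₁ t₀ := by rw [dist_comm, Subtype.dist_eq]
        _ < δ := ht₁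
    have := hcont t hlt
    rwa [ht₀] at this
  have hz : (((0 : ℝ), ε)) ∈ C := ⟨t₀, by simp [hSdef, left_mem_uIcc], ht₀⟩
  have := comp_triv ε hε C hCpre hCsub hCball hz
  exact this _ ⟨t₁, by simp [hSdef, right_mem_uIcc], rfl⟩

theorem stmt10 (g : unitInterval → ℝ × ℝ)
    (hg1 : ∀ x : unitInterval, (x : ℝ) < 1 / 2 → g x = ((0 : ℝ), (1 : ℝ)))
    (hg2 : ∀ x : unitInterval, 1 / 2 ≤ (x : ℝ) → g x = ((0 : ℝ), (-1 : ℝ))) :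
    ¬ ∃ f : unitInterval × unitInterval → ↥ZSet,
        SepCont f ∧ ∀ x : unitInterval, (f (x, x) : ℝ × ℝ) = g x := by
  rintro ⟨f, ⟨hsec1, hsec2⟩, hdiag⟩
  -- each section through the diagonal is constant, by clopen-ness of fibers
  have hconst : ∀ (x₀ : unitInterval) (ε : ℝ), (ε = 1 ∨ ε = -1) →
      (f (x₀, x₀) : ℝ × ℝ) = ((0 : ℝ), ε) → ∀ y, (f (x₀, y) : ℝ × ℝ) = ((0 : ℝ), ε) := by
    intro x₀ ε hε hval y
    set S : Set unitInterval := {t | (f (x₀, t) : ℝ × ℝ) = ((0 : ℝ), ε)} with hSdef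
    have hopen : IsOpen S := fiber_open ε hε (fun t => f (x₀, t)) (hsec1 x₀)
    have hclosed : IsClosed S := by
      have hcont : Continuous fun t : unitInterval => (f (x₀, t) : ℝ × ℝ) :=
        continuous_subtype_val.comp (hsec1 x₀)
      exact isClosed_singleton.preimage hcont
    rcases isClopen_iff.mp ⟨hclosed, hopen⟩ with h | h
    · exfalso
      have : x₀ ∈ S := hval
      rw [h] at this
      exact this
    · have : y ∈ S := by rw [h]; trivial
      exact this
  -- the horizontal section at y = 0
  set half : unitInterval := ⟨1 / 2, by norm_num, by norm_num⟩ with hhalf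
  have hV : IsOpen {x : unitInterval | (f (x, 0) : ℝ × ℝ) = ((0 : ℝ), (-1 : ℝ))} :=
    fiber_open (-1) (Or.inr rfl) (fun x => f (x, 0)) (hsec2 0)
  have hhalfV : half ∈ {x : unitInterval | (f (x, 0) : ℝ × ℝ) = ((0 : ℝ), (-1 : ℝ))} := by
    have := hconst half (-1) (Or.inr rfl) (by rw [hdiag half, hg2 half (by norm_num [hhalf])]) 0
    exact this
  rw [Metric.isOpen_iff] at hV
  obtain ⟨δ, hδ, hball⟩ := hV half hhalfV
  -- pick a point slightly below 1/2
  set r : ℝ := min (δ / 2) (1 / 4) with hr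
  have hr0 : 0 < r := lt_min (by linarith) (by norm_num)
  have hr4 : r ≤ 1 / 4 := min_le_right _ _
  set x : unitInterval := ⟨1 / 2 - r, by constructor <;> [linarith; linarith]⟩ with hx
  have hxball : x ∈ Metric.ball half δ := by
    rw [Metric.mem_ball, Subtype.dist_eq, Real.dist_eq]
    have : ((x : ℝ)) - ((half : ℝ)) = -r := by simp [hx, hhalf]
    rw [this, abs_neg, abs_of_pos hr0]
    have : r ≤ δ / 2 := min_le_left _ _
    linarith
  have h1 : (f (x, 0) : ℝ × ℝ) = ((0 : ℝ), (-1 : ℝ)) := hball hxball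
  have h2 : (f (x, 0) : ℝ × ℝ) = ((0 : ℝ), (1 : ℝ)) := by
    apply hconst x 1 (Or.inl rfl)
    rw [hdiag x, hg1 x (by simp [hx]; linarith)]
  rw [h1] at h2
  have := congrArg Prod.snd h2
  norm_num at this
end

section
/- Let Z = {(0,1), (0,−1)} ∪ ⋃ₙ₌₁^∞ {(x, n·x) : x ∈ ℝ} ⊆ ℝ² with the subspace topology. Then the singletons {(0,1)} and {(0,−1)} are connected components of the space Z \ {(0,0)}. -/
open Set Filter Topology

lemma int_ne_half (a b : ℤ) : (a : ℝ) ≠ (b : ℝ) + 1/2 := by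
  intro h
  have h2 : ((2*a : ℤ) : ℝ) = ((2*b + 1 : ℤ) : ℝ) := by push_cast; linarith
  have : (2*a : ℤ) = 2*b + 1 := by exact_mod_cast h2
  omega

lemma sep_lemma (s : ℝ) (hs : ∀ m : ℕ, 1 ≤ m → (m : ℝ) ≠ s)
    (C : Set (ℝ × ℝ)) (hC : IsPreconnected C)
    (hCS : C ⊆ ZSet \ {((0:ℝ),(0:ℝ))})
    (p q : ℝ × ℝ) (hp : p ∈ C) (hq : q ∈ C)
    (hps : 0 < p.2 - s * p.1) (hqs : q.2 - s * q.1 < 0) : False := by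
  have hU : IsOpen {r : ℝ × ℝ | 0 < r.2 - s * r.1} := by
    apply isOpen_lt continuous_const; fun_prop
  have hV : IsOpen {r : ℝ × ℝ | r.2 - s * r.1 < 0} := by
    apply isOpen_lt _ continuous_const; fun_prop
  have hcov : C ⊆ {r : ℝ × ℝ | 0 < r.2 - s * r.1} ∪ {r : ℝ × ℝ | r.2 - s * r.1 < 0} := by
    intro r hr
    obtain ⟨hrZ, hr0⟩ := hCS hr
    have hne : r.2 - s * r.1 ≠ 0 := by
      rcases hrZ with (h | h) | ⟨m, hm, h2⟩
      · subst h; norm_num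
      · subst h; norm_num
      · have hr1 : r.1 ≠ 0 := by
          intro h1
          apply hr0
          have : r.2 = 0 := by rw [h2, h1, mul_zero]
          simp only [Set.mem_singleton_iff]
          exact Prod.ext h1 this
        have hms : (m : ℝ) ≠ s := hs m hm
        rw [h2]
        have h3 : ((m : ℝ) - s) * r.1 ≠ 0 := mul_ne_zero (sub_ne_zero.mpr hms) hr1
        simpa [sub_mul] using h3
    rcases hne.lt_or_gt with h | h
    · right; exact h
    · left; exact h
  obtain ⟨x, _, hx1, hx2⟩ := hC _ _ hU hV hcov ⟨p, hp, hps⟩ ⟨q, hq, hqs⟩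
  simp only [Set.mem_setOf_eq] at hx1 hx2
  linarith


lemma nat_ne_halfint (m : ℕ) (b : ℤ) : (m : ℝ) ≠ (b : ℝ) + 1/2 := by
  have := int_ne_half (m : ℤ) b
  push_cast at this ⊢
  exact this

lemma q_line_ne_zero {q : ℝ × ℝ} {n : ℕ} (h2 : q.2 = (n : ℝ) * q.1)
    (hq0 : q ∉ ({((0:ℝ),(0:ℝ))} : Set (ℝ × ℝ))) : q.1 ≠ 0 := by
  intro h1
  apply hq0
  have : q.2 = 0 := by rw [h2, h1, mul_zero]
  simp only [Set.mem_singleton_iff]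
  exact Prod.ext h1 this

lemma comp_sub_one (C : Set (ℝ × ℝ)) (hC : IsPreconnected C)
    (hCS : C ⊆ ZSet \ {((0:ℝ),(0:ℝ))})
    (hmem : ((0:ℝ),(1:ℝ)) ∈ C) : C ⊆ {((0:ℝ),(1:ℝ))} := by
  intro q hq
  by_contra hne
  obtain ⟨hqZ, hq0⟩ := hCS hq
  rcases hqZ with (h | h) | ⟨n, hn, h2⟩
  · exact hne h
  · refine sep_lemma (1/2) (fun m hm => by simpa using nat_ne_halfint m 0)
      C hC hCS _ _ hmem hq (by norm_num) ?_
    rw [h]; norm_num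
  · have hq1 : q.1 ≠ 0 := q_line_ne_zero h2 hq0
    rcases hq1.lt_or_gt with hlt | hgt
    · refine sep_lemma ((n : ℝ) - 1/2)
        (fun m hm => by
          have := nat_ne_halfint m ((n : ℤ) - 1)
          push_cast at this ⊢
          intro h'; exact this (by linarith))
        C hC hCS _ _ hmem hq (by norm_num) ?_
      rw [h2]; nlinarith
    · refine sep_lemma ((n : ℝ) + 1/2)
        (fun m hm => by
          have := nat_ne_halfint m (n : ℤ)
          push_cast at this ⊢
          exact this)
        C hC hCS _ _ hmem hq (by norm_num) ?_
      rw [h2]; nlinarith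

lemma comp_sub_neg (C : Set (ℝ × ℝ)) (hC : IsPreconnected C)
    (hCS : C ⊆ ZSet \ {((0:ℝ),(0:ℝ))})
    (hmem : ((0:ℝ),(-1:ℝ)) ∈ C) : C ⊆ {((0:ℝ),(-1:ℝ))} := by
  intro q hq
  by_contra hne
  obtain ⟨hqZ, hq0⟩ := hCS hq
  rcases hqZ with (h | h) | ⟨n, hn, h2⟩
  · refine sep_lemma (1/2) (fun m hm => by simpa using nat_ne_halfint m 0)
      C hC hCS _ _ hq hmem ?_ (by norm_num)
    rw [h]; norm_num
  · exact hne h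
  · have hq1 : q.1 ≠ 0 := q_line_ne_zero h2 hq0
    rcases hq1.lt_or_gt with hlt | hgt
    · refine sep_lemma ((n : ℝ) + 1/2)
        (fun m hm => by
          have := nat_ne_halfint m (n : ℤ)
          push_cast at this ⊢
          exact this)
        C hC hCS _ _ hq hmem ?_ (by norm_num)
      rw [h2]; nlinarith
    · refine sep_lemma ((n : ℝ) - 1/2)
        (fun m hm => by
          have := nat_ne_halfint m ((n : ℤ) - 1)
          push_cast at this ⊢
          intro h'; exact this (by linarith))
        C hC hCS _ _ hq hmem ?_ (by norm_num)
      rw [h2]; nlinarith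

theorem stmt11 :
    connectedComponentIn (ZSet \ {((0 : ℝ), (0 : ℝ))}) ((0 : ℝ), (1 : ℝ)) =
      {((0 : ℝ), (1 : ℝ))} ∧
    connectedComponentIn (ZSet \ {((0 : ℝ), (0 : ℝ))}) ((0 : ℝ), (-1 : ℝ)) =
      {((0 : ℝ), (-1 : ℝ))} := by
  have h1 : ((0:ℝ),(1:ℝ)) ∈ ZSet \ {((0:ℝ),(0:ℝ))} := by
    constructor
    · left; left; rfl
    · simp [Prod.ext_iff]
  have h2 : ((0:ℝ),(-1:ℝ)) ∈ ZSet \ {((0:ℝ),(0:ℝ))} := by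
    constructor
    · left; right; rfl
    · simp [Prod.ext_iff]
  constructor
  · exact Set.Subset.antisymm
      (comp_sub_one _ isPreconnected_connectedComponentIn
        (connectedComponentIn_subset _ _) (mem_connectedComponentIn h1))
      (Set.singleton_subset_iff.mpr (mem_connectedComponentIn h1))
  · exact Set.Subset.antisymm
      (comp_sub_neg _ isPreconnected_connectedComponentIn
        (connectedComponentIn_subset _ _) (mem_connectedComponentIn h2))
      (Set.singleton_subset_iff.mpr (mem_connectedComponentIn h2))
end

section
/- Let Z = {(0,1), (0,−1)} ∪ ⋃ₙ₌₁^∞ {(x, n·x) : x ∈ ℝ} ⊆ ℝ² with the subspace topology. Then every connected subset C ⊆ Z containing at least one of the points (0,1) and (0,−1) is either a singleton or contains the point (0,0). -/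
open Set Filter Topology

theorem stmt12 (C : Set (ℝ × ℝ)) (hCZ : C ⊆ ZSet) (hC : IsConnected C)
    (hmem : ((0 : ℝ), (1 : ℝ)) ∈ C ∨ ((0 : ℝ), (-1 : ℝ)) ∈ C) :
    (∃ p : ℝ × ℝ, C = {p}) ∨ ((0 : ℝ), (0 : ℝ)) ∈ C := by
  by_cases h0 : ((0 : ℝ), (0 : ℝ)) ∈ C
  · exact Or.inr h0
  left
  -- pick the special point in C
  obtain ⟨b, hb, hbC⟩ : ∃ b : ℝ, b ≠ 0 ∧ ((0 : ℝ), b) ∈ C := by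
    rcases hmem with h | h
    · exact ⟨1, one_ne_zero, h⟩
    · exact ⟨-1, by norm_num, h⟩
  by_cases hq : ∃ q ∈ C, q.1 ≠ 0
  · exfalso
    obtain ⟨q, hqC, hq1⟩ := hq
    -- q lies on some line y = m x with m ≥ 1
    obtain ⟨m, hm1, hm2⟩ : ∃ n : ℕ, 1 ≤ n ∧ q.2 = (n : ℝ) * q.1 := by
      rcases hCZ hqC with hsp | hl
      · exfalso
        simp only [mem_insert_iff, mem_singleton_iff] at hsp
        rcases hsp with h | h <;> (rw [Prod.ext_iff] at h; exact hq1 h.1)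
      · exact hl
    set O : Set (ℝ × ℝ) := {p | p.1 ≠ 0 ∧ |p.2 - (m : ℝ) * p.1| < |p.1| / 2} with hO
    set F : Set (ℝ × ℝ) := {p | p.2 = (m : ℝ) * p.1} with hF
    have hOopen : IsOpen O := by
      have h1 : IsOpen {p : ℝ × ℝ | p.1 ≠ 0} :=
        isOpen_compl_singleton.preimage continuous_fst
      have h2 : IsOpen {p : ℝ × ℝ | |p.2 - (m : ℝ) * p.1| < |p.1| / 2} := by
        apply isOpen_lt
        · fun_prop
        · fun_prop
      exact h1.inter h2
    have hFc : IsOpen Fᶜ := by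
      have : IsClosed F := isClosed_eq (by fun_prop) (by fun_prop)
      exact this.isOpen_compl
    -- helper: points of C on F with nonzero first coordinate
    have hcover : C ⊆ O ∪ Fᶜ := by
      intro c hcC
      by_cases hcF : c ∈ F
      · left
        have hc1 : c.1 ≠ 0 := by
          intro hc0
          rcases hCZ hcC with hsp | ⟨n, hn1, hn2⟩
          · simp only [mem_insert_iff, mem_singleton_iff] at hsp
            rcases hsp with h | h <;>
              (rw [Prod.ext_iff] at h
               rw [hF] at hcF
               simp only [mem_setOf_eq] at hcF
               rw [hc0, mul_zero] at hcF
               rw [hcF] at h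
               norm_num at h)
          · apply h0
            have : c = ((0 : ℝ), (0 : ℝ)) := by
              have : c.2 = 0 := by rw [hn2, hc0, mul_zero]
              exact Prod.ext hc0 this
            rwa [this] at hcC
        refine ⟨hc1, ?_⟩
        rw [hF] at hcF
        simp only [mem_setOf_eq] at hcF
        rw [hcF, sub_self, abs_zero]
        positivity
      · right; exact hcF
    have hOne : (C ∩ O).Nonempty := by
      refine ⟨q, hqC, hq1, ?_⟩
      rw [hm2, sub_self, abs_zero]
      positivity
    have hFne : (C ∩ Fᶜ).Nonempty := by
      refine ⟨(0, b), hbC, ?_⟩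
      simp only [hF, mem_compl_iff, mem_setOf_eq]
      simpa using hb
    obtain ⟨c, hcC, hcO, hcF⟩ := hC.2 O Fᶜ hOopen hFc hcover hOne hFne
    obtain ⟨hc1, hc2⟩ := hcO
    rcases hCZ hcC with hsp | ⟨n, hn1, hn2⟩
    · simp only [mem_insert_iff, mem_singleton_iff] at hsp
      rcases hsp with h | h <;> (rw [Prod.ext_iff] at h; exact hc1 h.1)
    · -- |n - m| * |c.1| < |c.1|/2, so n = m
      rw [hn2] at hc2
      have habs : |(n : ℝ) - (m : ℝ)| * |c.1| < |c.1| / 2 := by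
        rwa [← abs_mul, sub_mul]
      have hcpos : 0 < |c.1| := abs_pos.mpr hc1
      have hlt : |(n : ℝ) - (m : ℝ)| < 1 / 2 := by
        by_contra hge
        push_neg at hge
        have := mul_le_mul_of_nonneg_right hge (le_of_lt hcpos)
        nlinarith
      have hnm : n = m := by
        obtain ⟨hl1, hl2⟩ := abs_lt.mp hlt
        have h1 : (n : ℝ) < m + 1 := by linarith
        have h2 : (m : ℝ) < n + 1 := by linarith
        have h1' : n < m + 1 := by exact_mod_cast h1
        have h2' : m < n + 1 := by exact_mod_cast h2
        omega
      apply hcF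
      rw [hF]
      simp only [mem_setOf_eq]
      rw [hn2, hnm]
  · -- all points of C have first coordinate 0, so C ⊆ {(0,1),(0,-1)}
    push_neg at hq
    have hsub : ∀ c ∈ C, c = ((0 : ℝ), (1 : ℝ)) ∨ c = ((0 : ℝ), (-1 : ℝ)) := by
      intro c hcC
      rcases hCZ hcC with hsp | ⟨n, hn1, hn2⟩
      · simpa only [mem_insert_iff, mem_singleton_iff] using hsp
      · exfalso
        apply h0
        have hc1 : c.1 = 0 := hq c hcC
        have : c = ((0 : ℝ), (0 : ℝ)) := by
          have : c.2 = 0 := by rw [hn2, hc1, mul_zero]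
          exact Prod.ext hc1 this
        rwa [this] at hcC
    -- C cannot contain both points
    have hnotboth : ¬ (((0 : ℝ), (1 : ℝ)) ∈ C ∧ ((0 : ℝ), (-1 : ℝ)) ∈ C) := by
      rintro ⟨h1, h2⟩
      set U : Set (ℝ × ℝ) := {p | 0 < p.2} with hU
      set V : Set (ℝ × ℝ) := {p | p.2 < 0} with hV
      have hUo : IsOpen U := isOpen_lt continuous_const continuous_snd
      have hVo : IsOpen V := isOpen_lt continuous_snd continuous_const
      have hcov : C ⊆ U ∪ V := by
        intro c hcC
        rcases hsub c hcC with h | h <;> (rw [h]; simp [hU, hV])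
      obtain ⟨c, _, hcU, hcV⟩ := hC.2 U V hUo hVo hcov
        ⟨_, h1, by norm_num [hU]⟩ ⟨_, h2, by norm_num [hV]⟩
      simp only [hU, hV, mem_setOf_eq] at hcU hcV
      linarith
    rcases hmem with h | h
    · refine ⟨((0 : ℝ), (1 : ℝ)), ?_⟩
      apply Subset.antisymm
      · intro c hcC
        rcases hsub c hcC with hc | hc
        · exact hc
        · exact absurd ⟨h, hc ▸ hcC⟩ hnotboth
      · intro c hc
        rw [mem_singleton_iff] at hc
        rwa [hc]
    · refine ⟨((0 : ℝ), (-1 : ℝ)), ?_⟩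
      apply Subset.antisymm
      · intro c hcC
        rcases hsub c hcC with hc | hc
        · exact absurd ⟨hc ▸ hcC, h⟩ hnotboth
        · exact hc
      · intro c hc
        rw [mem_singleton_iff] at hc
        rwa [hc]
end

section
/- Define the multi-valued mapping g : [0,1] → Set ℝ by g(x) = {x + n : n ∈ ℕ, n ≥ 1}. Then there is no closed-valued separately continuous multi-valued mapping f : [0,1] × [0,1] → Set ℝ with f(x,x) = g(x) for every x ∈ [0,1]. -/
open Set Filter Topology

noncomputable def eps (n : ℕ) : ℝ := 1 / (16 * ((n:ℝ) + 1))

lemma eps_pos (n : ℕ) : 0 < eps n := by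
  have : (0:ℝ) < 16 * ((n:ℝ)+1) := by positivity
  exact div_pos one_pos this

lemma eps_le (n : ℕ) : eps n ≤ 1/16 := by
  rw [eps, div_le_div_iff₀ (by positivity) (by norm_num)]
  have h : (0:ℝ) ≤ (n:ℝ) := Nat.cast_nonneg n
  nlinarith

noncomputable def Vset (p : ℝ) : Set ℝ := ⋃ (n : ℕ) (_ : 1 ≤ n), Metric.ball (p + n) (eps n)

lemma isOpen_Vset (p : ℝ) : IsOpen (Vset p) :=
  isOpen_iUnion fun _ => isOpen_iUnion fun _ => Metric.isOpen_ball

lemma mem_Vset {p z : ℝ} : z ∈ Vset p ↔ ∃ n : ℕ, 1 ≤ n ∧ |z - (p + n)| < eps n := by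
  simp only [Vset, mem_iUnion, Metric.mem_ball, Real.dist_eq, exists_prop]

lemma strand_eq {n m : ℕ} (hn : 1 ≤ n) (hm : 1 ≤ m) {a b z : ℝ}
    (hab : |a - b| ≤ 1/4) (h1 : |z - (a + n)| ≤ eps n) (h2 : |z - (b + m)| < eps m) :
    m = n := by
  have e1 := eps_le n
  have e2 := eps_le m
  have key : |(n : ℝ) - m| < 1 := by
    have hrw : (n:ℝ) - m = (-(z - (a + n))) + (z - (b + m)) + (-(a - b)) := by ring
    calc |(n:ℝ) - m| ≤ |(-(z - (a + n)))| + |(z - (b + m))| + |(-(a - b))| := by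
          rw [hrw]; exact abs_add_three _ _ _
      _ = |z - (a+n)| + |z - (b+m)| + |a - b| := by rw [abs_neg, abs_neg]
      _ < 1 := by linarith
  by_contra hne
  rcases Nat.lt_or_ge m n with h | h
  · have h1' : (m:ℝ) + 1 ≤ n := by exact_mod_cast h
    have := le_abs_self ((n:ℝ) - m)
    linarith
  · have h' : n < m := lt_of_le_of_ne h (Ne.symm hne)
    have h1' : (n:ℝ) + 1 ≤ m := by exact_mod_cast h'
    have := le_abs_self ((m:ℝ) - n)
    rw [abs_sub_comm] at key
    linarith

lemma upper_delta {F : unitInterval → Set ℝ} {p : unitInterval}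
    (h : UpperContAt F p) {V : Set ℝ} (hV : IsOpen V) (hFV : F p ⊆ V) :
    ∃ δ > 0, ∀ x : unitInterval, |(x:ℝ) - (p:ℝ)| < δ → F x ⊆ V := by
  obtain ⟨U, hU, hprop⟩ := h V hV hFV
  rw [Metric.mem_nhds_iff] at hU
  obtain ⟨δ, hδ, hball⟩ := hU
  refine ⟨δ, hδ, fun x hx => hprop x (hball ?_)⟩
  rw [Metric.mem_ball, Subtype.dist_eq, Real.dist_eq]
  exact hx

lemma lower_delta {F : unitInterval → Set ℝ} {p : unitInterval}
    (h : LowerContAt F p) {V : Set ℝ} (hV : IsOpen V) (hFV : (F p ∩ V).Nonempty) :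
    ∃ δ > 0, ∀ x : unitInterval, |(x:ℝ) - (p:ℝ)| < δ → (F x ∩ V).Nonempty := by
  obtain ⟨U, hU, hprop⟩ := h V hV hFV
  rw [Metric.mem_nhds_iff] at hU
  obtain ⟨δ, hδ, hball⟩ := hU
  refine ⟨δ, hδ, fun x hx => hprop x (hball ?_)⟩
  rw [Metric.mem_ball, Subtype.dist_eq, Real.dist_eq]
  exact hx

lemma strands (f : unitInterval × unitInterval → Set ℝ)
    (hsep : MVSepCont f)
    (hd : ∀ x : unitInterval, f (x, x) = {y : ℝ | ∃ n : ℕ, 1 ≤ n ∧ y = (x:ℝ) + n})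
    (p : unitInterval) :
    ∃ δ > 0, ∀ n : ℕ, 1 ≤ n → ∀ x : unitInterval, |(x:ℝ) - (p:ℝ)| < δ →
      (f (x, p) ∩ Metric.ball ((p:ℝ) + n) (eps n)).Nonempty := by
  have hgV : f (p, p) ⊆ Vset (p:ℝ) := by
    rw [hd]
    rintro z ⟨n, hn, rfl⟩
    exact mem_Vset.2 ⟨n, hn, by simpa using eps_pos n⟩
  obtain ⟨δ, hδ, htube⟩ := upper_delta (hsep.2 p p).1 (isOpen_Vset _) hgV
  refine ⟨δ, hδ, ?_⟩
  intro n hn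
  set Bn : Set ℝ := Metric.ball ((p:ℝ) + n) (eps n) with hBn
  -- for every x, a radius propagating "hit" or "miss"
  have hrad : ∀ x : unitInterval, ∃ ρ > 0, ∀ x' : unitInterval, |(x':ℝ) - (x:ℝ)| < ρ →
      (((f (x, p) ∩ Bn).Nonempty → (f (x', p) ∩ Bn).Nonempty) ∧
       ((|(x:ℝ) - (p:ℝ)| < δ ∧ ¬ (f (x, p) ∩ Bn).Nonempty) → f (x', p) ∩ Bn = ∅)) := by
    intro x
    by_cases hA : (f (x, p) ∩ Bn).Nonempty
    · obtain ⟨ρ, hρ, hprop⟩ := lower_delta (hsep.2 p x).2 Metric.isOpen_ball hA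
      exact ⟨ρ, hρ, fun x' hx' => ⟨fun _ => hprop x' hx', fun h => absurd hA h.2⟩⟩
    · by_cases hxδ : |(x:ℝ) - (p:ℝ)| < δ
      · -- miss case : f (x,p) avoids the closed ball
        have hsubW : f (x, p) ⊆ Vset (p:ℝ) ∩ (Metric.closedBall ((p:ℝ)+n) (eps n))ᶜ := by
          intro z hz
          refine ⟨htube x hxδ hz, ?_⟩
          intro hzcb
          obtain ⟨m, hm, hzm⟩ := mem_Vset.1 (htube x hxδ hz)
          have habs : |z - ((p:ℝ) + n)| ≤ eps n := by
            rwa [Metric.mem_closedBall, Real.dist_eq] at hzcb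
          have hmn : m = n := strand_eq hn hm (by simp) habs hzm
          subst hmn
          exact hA ⟨z, hz, by rwa [hBn, Metric.mem_ball, Real.dist_eq]⟩
        have hWopen : IsOpen (Vset (p:ℝ) ∩ (Metric.closedBall ((p:ℝ)+n) (eps n))ᶜ) :=
          (isOpen_Vset _).inter Metric.isClosed_closedBall.isOpen_compl
        obtain ⟨ρ, hρ, hprop⟩ := upper_delta (hsep.2 p x).1 hWopen hsubW
        refine ⟨ρ, hρ, fun x' hx' => ⟨fun h => absurd h hA, fun _ => ?_⟩⟩
        rw [eq_empty_iff_forall_notMem]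
        rintro z ⟨hzf, hzb⟩
        exact (hprop x' hx' hzf).2 (Metric.ball_subset_closedBall hzb)
      · exact ⟨1, one_pos, fun x' _ =>
          ⟨fun h => absurd h hA, fun h => absurd h.1 hxδ⟩⟩
  choose ρ hρ hprop using hrad
  by_contra hbad
  push_neg at hbad
  obtain ⟨x₁, hx₁δ, hx₁⟩ := hbad
  set U : Set ℝ := ⋃ (x : unitInterval) (_ : (f (x, p) ∩ Bn).Nonempty),
      Metric.ball (x:ℝ) (ρ x) with hU
  set V : Set ℝ := ⋃ (x : unitInterval)
      (_ : |(x:ℝ) - (p:ℝ)| < δ ∧ ¬ (f (x, p) ∩ Bn).Nonempty),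
      Metric.ball (x:ℝ) (ρ x) with hV
  have hUopen : IsOpen U := isOpen_iUnion fun _ => isOpen_iUnion fun _ => Metric.isOpen_ball
  have hVopen : IsOpen V := isOpen_iUnion fun _ => isOpen_iUnion fun _ => Metric.isOpen_ball
  have hIpre : IsPreconnected (Metric.ball (p:ℝ) δ ∩ Icc (0:ℝ) 1) :=
    ((convex_ball _ _).inter (convex_Icc _ _)).isPreconnected
  have hsub : Metric.ball (p:ℝ) δ ∩ Icc (0:ℝ) 1 ⊆ U ∪ V := by
    rintro t ⟨ht1, ht2⟩
    have htδ : |t - (p:ℝ)| < δ := by rwa [Metric.mem_ball, Real.dist_eq] at ht1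
    set x : unitInterval := ⟨t, ht2⟩ with hx
    by_cases hA : (f (x, p) ∩ Bn).Nonempty
    · exact Or.inl (mem_iUnion.2 ⟨x, mem_iUnion.2 ⟨hA, Metric.mem_ball_self (hρ x)⟩⟩)
    · exact Or.inr (mem_iUnion.2 ⟨x, mem_iUnion.2 ⟨⟨htδ, hA⟩, Metric.mem_ball_self (hρ x)⟩⟩)
  have hUne : ((Metric.ball (p:ℝ) δ ∩ Icc (0:ℝ) 1) ∩ U).Nonempty := by
    refine ⟨(p:ℝ), ⟨⟨Metric.mem_ball_self hδ, p.2⟩, ?_⟩⟩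
    have hApp : (f (p, p) ∩ Bn).Nonempty := by
      refine ⟨(p:ℝ) + n, ?_, ?_⟩
      · rw [hd]; exact ⟨n, hn, rfl⟩
      · rw [hBn, Metric.mem_ball, Real.dist_eq]; simpa using eps_pos n
    exact mem_iUnion.2 ⟨p, mem_iUnion.2 ⟨hApp, Metric.mem_ball_self (hρ p)⟩⟩
  have hVne : ((Metric.ball (p:ℝ) δ ∩ Icc (0:ℝ) 1) ∩ V).Nonempty := by
    refine ⟨(x₁:ℝ), ⟨⟨?_, x₁.2⟩, ?_⟩⟩
    · rwa [Metric.mem_ball, Real.dist_eq]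
    · exact mem_iUnion.2 ⟨x₁, mem_iUnion.2 ⟨⟨hx₁δ, Set.not_nonempty_iff_eq_empty.2 hx₁⟩, Metric.mem_ball_self (hρ x₁)⟩⟩
  obtain ⟨t, ⟨⟨_, htI⟩, htU, htV⟩⟩ := hIpre U V hUopen hVopen hsub hUne hVne
  set xt : unitInterval := ⟨t, htI⟩ with hxt
  obtain ⟨x₀, hrest⟩ := mem_iUnion.1 htU
  obtain ⟨hx₀A, htb⟩ := mem_iUnion.1 hrest
  obtain ⟨x₁', hrest'⟩ := mem_iUnion.1 htV
  obtain ⟨hx₁'B, htb'⟩ := mem_iUnion.1 hrest'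
  have h1 : (f (xt, p) ∩ Bn).Nonempty := by
    refine ((hprop x₀ xt ?_).1) hx₀A
    rwa [Metric.mem_ball, Real.dist_eq] at htb
  have h2 : f (xt, p) ∩ Bn = ∅ := by
    refine ((hprop x₁' xt ?_).2) hx₁'B
    rwa [Metric.mem_ball, Real.dist_eq] at htb'
  rw [h2] at h1
  exact Set.not_nonempty_empty h1

def Cset (f : unitInterval × unitInterval → Set ℝ) (k : ℕ) : Set ℝ :=
  {t : ℝ | ∃ ht : t ∈ unitInterval, ∀ n : ℕ, 1 ≤ n → ∀ x : unitInterval,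
    |(x:ℝ) - t| < 1 / ((k:ℝ) + 1) →
    (f (x, ⟨t, ht⟩) ∩ Metric.closedBall (t + n) (eps n)).Nonempty}

lemma cover_Cset (f : unitInterval × unitInterval → Set ℝ)
    (hsep : MVSepCont f)
    (hd : ∀ x : unitInterval, f (x, x) = {y : ℝ | ∃ n : ℕ, 1 ≤ n ∧ y = (x:ℝ) + n})
    (p : unitInterval) : ∃ k : ℕ, (p:ℝ) ∈ Cset f k := by
  obtain ⟨δ, hδ, hstr⟩ := strands f hsep hd p
  obtain ⟨k, hk⟩ := exists_nat_one_div_lt hδ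
  refine ⟨k, p.2, ?_⟩
  intro n hn x hx
  have hx' : |(x:ℝ) - (p:ℝ)| < δ := lt_trans (by exact_mod_cast hx) hk
  obtain ⟨z, hz1, hz2⟩ := hstr n hn x hx'
  exact ⟨z, hz1, Metric.ball_subset_closedBall hz2⟩

lemma isClosed_Cset (f : unitInterval × unitInterval → Set ℝ)
    (hcv : ClosedValued f) (hsep : MVSepCont f) (k : ℕ) :
    IsClosed (Cset f k) := by
  apply IsSeqClosed.isClosed
  intro u t hu hut
  have htI : t ∈ unitInterval := by
    refine isClosed_Icc.mem_of_tendsto hut (Eventually.of_forall fun j => ?_)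
    exact (hu j).choose
  refine ⟨htI, ?_⟩
  intro n hn x hx
  by_contra hempty
  rw [Set.not_nonempty_iff_eq_empty] at hempty
  set F : Set ℝ := f (x, ⟨t, htI⟩) with hF
  have hFcl : IsClosed F := (hcv (x, ⟨t, htI⟩)).2
  have hFne : F.Nonempty := (hcv (x, ⟨t, htI⟩)).1
  obtain ⟨z, hzF, hzd⟩ := hFcl.exists_infDist_eq_dist hFne (t + n)
  have hzout : eps n < dist (t + n) z := by
    by_contra hle
    push_neg at hle
    have : z ∈ f (x, ⟨t, htI⟩) ∩ Metric.closedBall (t + n) (eps n) :=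
      ⟨hzF, by rwa [Metric.mem_closedBall, dist_comm]⟩
    rw [hempty] at this
    exact this
  set d : ℝ := Metric.infDist (t + n) F with hdd
  set θ : ℝ := (d - eps n) / 2 with hθ
  have hdgt : eps n < d := by rw [hzd]; exact hzout
  have hθpos : 0 < θ := by rw [hθ]; linarith
  have hFW : F ⊆ (Metric.closedBall (t + n) (eps n + θ))ᶜ := by
    intro z' hz'
    have h1 : d ≤ dist (t + n) z' := Metric.infDist_le_dist_of_mem hz'
    intro hmem
    rw [Metric.mem_closedBall, dist_comm] at hmem
    have : eps n + θ < d := by rw [hθ]; linarith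
    linarith
  have hWopen : IsOpen (Metric.closedBall (t + n) (eps n + θ))ᶜ :=
    Metric.isClosed_closedBall.isOpen_compl
  obtain ⟨ρ, hρ, hprop⟩ := upper_delta (hsep.1 x ⟨t, htI⟩).1 hWopen hFW
  have hgap : 0 < 1 / ((k:ℝ) + 1) - |(x:ℝ) - t| := by linarith
  set c : ℝ := min ρ (min θ (1 / ((k:ℝ) + 1) - |(x:ℝ) - t|)) with hc
  have hcpos : 0 < c := lt_min hρ (lt_min hθpos hgap)
  obtain ⟨N, hN⟩ := Metric.tendsto_atTop.1 hut c hcpos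
  have hj := hN N le_rfl
  rw [Real.dist_eq] at hj
  obtain ⟨htj, hcond⟩ := hu N
  have hxj : |(x:ℝ) - u N| < 1 / ((k:ℝ) + 1) := by
    have h1 : |(x:ℝ) - u N| ≤ |(x:ℝ) - t| + |u N - t| := by
      have : (x:ℝ) - u N = ((x:ℝ) - t) - (u N - t) := by ring
      rw [this]; exact (abs_sub _ _).trans_eq (by rw [abs_sub_comm (u N) t, abs_sub_comm]) 
    have h2 : |u N - t| < 1 / ((k:ℝ) + 1) - |(x:ℝ) - t| :=
      lt_of_lt_of_le hj (le_trans (min_le_right _ _) (min_le_right _ _))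
    linarith
  obtain ⟨z', hz'f, hz'b⟩ := hcond n hn x hxj
  have hz'W : z' ∈ (Metric.closedBall (t + n) (eps n + θ))ᶜ := by
    apply hprop ⟨u N, htj⟩ _ hz'f
    exact lt_of_lt_of_le hj (min_le_left _ _)
  apply hz'W
  rw [Metric.mem_closedBall, Real.dist_eq] at hz'b ⊢
  have hθj : |u N - t| < θ := lt_of_lt_of_le hj (le_trans (min_le_right _ _) (min_le_left _ _))
  have : z' - (t + n) = (z' - (u N + n)) + (u N - t) := by ring
  rw [this]
  calc |(z' - (u N + n)) + (u N - t)| ≤ |z' - (u N + n)| + |u N - t| := abs_add_le _ _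
    _ ≤ eps n + θ := by
        have := abs_sub_comm z' (u N + n)
        linarith [le_of_lt hθj, hz'b]

theorem stmt14 (g : unitInterval → Set ℝ)
    (hg : ∀ x : unitInterval, g x = {y : ℝ | ∃ n : ℕ, 1 ≤ n ∧ y = (x : ℝ) + n}) :
    ¬ ∃ f : unitInterval × unitInterval → Set ℝ,
        ClosedValued f ∧ MVSepCont f ∧ ∀ x : unitInterval, f (x, x) = g x := by
  rintro ⟨f, hcv, hsep, hdiag⟩
  have hd : ∀ x : unitInterval, f (x, x) = {y : ℝ | ∃ n : ℕ, 1 ≤ n ∧ y = (x:ℝ) + n} :=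
    fun x => (hdiag x).trans (hg x)
  -- Baire category on the unit interval
  haveI : CompleteSpace unitInterval := isClosed_Icc.completeSpace_coe
  have hcover : (⋃ k : ℕ, (Subtype.val ⁻¹' Cset f k : Set unitInterval)) = univ := by
    rw [eq_univ_iff_forall]
    intro p
    obtain ⟨k, hk⟩ := cover_Cset f hsep hd p
    exact mem_iUnion.2 ⟨k, hk⟩
  obtain ⟨k, hint⟩ := nonempty_interior_of_iUnion_of_closed
    (fun k => (isClosed_Cset f hcv hsep k).preimage continuous_subtype_val) hcover
  obtain ⟨x₀, hx₀⟩ := hint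
  rw [mem_interior_iff_mem_nhds, Metric.mem_nhds_iff] at hx₀
  obtain ⟨ε', hε', hball⟩ := hx₀
  -- tube at x₀
  have hgV : f (x₀, x₀) ⊆ Vset (x₀:ℝ) := by
    rw [hd]
    rintro z ⟨n, hn, rfl⟩
    exact mem_Vset.2 ⟨n, hn, by simpa using eps_pos n⟩
  obtain ⟨δ, hδ, htube⟩ := upper_delta (hsep.1 x₀ x₀).1 (isOpen_Vset _) hgV
  -- choose y₀
  set m : ℝ := min (min ε' δ) (min (1 / ((k:ℝ) + 1)) (1/8)) / 2 with hm
  have hkpos : (0:ℝ) < 1 / ((k:ℝ) + 1) := by positivity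
  have hmpos : 0 < m := by
    have := lt_min (lt_min hε' hδ) (lt_min hkpos (by norm_num : (0:ℝ) < 1/8))
    rw [hm]; linarith
  have hm16 : m ≤ 1/16 := by
    have h1 : min (min ε' δ) (min (1 / ((k:ℝ) + 1)) (1/8)) ≤ 1/8 :=
      le_trans (min_le_right _ _) (min_le_right _ _)
    rw [hm]; linarith
  have hmε' : m < ε' := by
    have h1 : min (min ε' δ) (min (1 / ((k:ℝ) + 1)) (1/8)) ≤ ε' :=
      le_trans (min_le_left _ _) (min_le_left _ _)
    rw [hm]; linarith
  have hmδ : m < δ := by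
    have h1 : min (min ε' δ) (min (1 / ((k:ℝ) + 1)) (1/8)) ≤ δ :=
      le_trans (min_le_left _ _) (min_le_right _ _)
    rw [hm]; linarith
  have hmk : m < 1 / ((k:ℝ) + 1) := by
    have h1 : min (min ε' δ) (min (1 / ((k:ℝ) + 1)) (1/8)) ≤ 1 / ((k:ℝ) + 1) :=
      le_trans (min_le_right _ _) (min_le_left _ _)
    rw [hm]; linarith
  have hx₀I := x₀.2
  rw [Set.mem_Icc] at hx₀I
  set y₀ : ℝ := if ((x₀:ℝ) ≤ 1/2) then (x₀:ℝ) + m else (x₀:ℝ) - m with hy₀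
  have hy₀I : y₀ ∈ unitInterval := by
    rw [hy₀]
    split_ifs with h
    · constructor <;> [linarith; linarith]
    · push_neg at h
      constructor <;> [linarith; linarith]
  have habs : |y₀ - (x₀:ℝ)| = m := by
    rw [hy₀]
    split_ifs
    · rw [show (x₀:ℝ) + m - (x₀:ℝ) = m by ring, abs_of_pos hmpos]
    · rw [show (x₀:ℝ) - m - (x₀:ℝ) = -m by ring, abs_neg, abs_of_pos hmpos]
  -- y₀ ∈ Cset f k
  have hy₀C : y₀ ∈ Cset f k := by
    have : (⟨y₀, hy₀I⟩ : unitInterval) ∈ Subtype.val ⁻¹' Cset f k := by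
      apply hball
      rw [Metric.mem_ball, Subtype.dist_eq, Real.dist_eq]
      rw [habs]; exact hmε'
    exact this
  obtain ⟨hty, hcond⟩ := hy₀C
  -- tube membership
  have htub : f (x₀, ⟨y₀, hty⟩) ⊆ Vset (x₀:ℝ) := by
    apply htube
    rw [habs]; exact hmδ
  -- each strand gives a bound
  have hkey : ∀ n : ℕ, 1 ≤ n → m ≤ 2 * eps n := by
    intro n hn
    have hx₀y : |(x₀:ℝ) - y₀| < 1 / ((k:ℝ) + 1) := by
      rw [abs_sub_comm, habs]; exact hmk
    obtain ⟨z, hzf, hzb⟩ := hcond n hn x₀ hx₀y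
    rw [Metric.mem_closedBall, Real.dist_eq] at hzb
    obtain ⟨m', hm', hzm'⟩ := mem_Vset.1 (htub hzf)
    have hab : |y₀ - (x₀:ℝ)| ≤ 1/4 := by rw [habs]; linarith
    have : m' = n := strand_eq hn hm' hab hzb hzm'
    subst this
    have h1 : |y₀ - (x₀:ℝ)| ≤ |z - ((x₀:ℝ) + m')| + |z - (y₀ + m')| := by
      have hrw : y₀ - (x₀:ℝ) = (z - ((x₀:ℝ) + m')) - (z - (y₀ + m')) := by ring
      rw [hrw]
      exact abs_sub _ _
    rw [habs] at h1
    linarith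
  -- contradiction: eps n → 0
  obtain ⟨n₂, hn₂⟩ := exists_nat_one_div_lt (show (0:ℝ) < 8 * m by linarith)
  set n : ℕ := n₂ + 1 with hn
  have hn1 : 1 ≤ n := by omega
  have := hkey n hn1
  have hcast : ((n:ℝ)) = (n₂:ℝ) + 1 := by rw [hn]; push_cast; ring
  have hepsn : eps n ≤ 1 / (16 * ((n₂:ℝ) + 1)) := by
    rw [eps, hcast]
    have h0 : (0:ℝ) < 16 * ((n₂:ℝ) + 1) := by positivity
    have h1 : 16 * ((n₂:ℝ) + 1) ≤ 16 * (((n₂:ℝ) + 1) + 1) := by linarith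
    exact one_div_le_one_div_of_le h0 h1
  have h8 : 1 / ((n₂:ℝ) + 1) < 8 * m := hn₂
  have : m < m := by
    have h2 : 2 * eps n ≤ 2 * (1 / (16 * ((n₂:ℝ) + 1))) := by linarith
    have h3 : 2 * (1 / (16 * ((n₂:ℝ) + 1))) = (1 / ((n₂:ℝ) + 1)) / 8 := by
      field_simp; ring
    nlinarith [hkey n hn1]
  exact lt_irrefl m this
end
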